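/- arXiv:2007.13104 — 3 statements merged into one kernel-verified Lean document; each statement's English description precedes it below -/
import Mathlib

section
/- Let λ > 4, 0 < α ≤ m(λ−4), let μ be a power bounded measure of order m on ℝⁿ, let s_t be a bilinear Littlewood–Paley kernel with exponent α, and let t₀ > 0. Let f₁, f₂ be bounded Borel functions with compact support. For ξ > 0 set Ω_ξ = {x ∈ ℝⁿ : g^*_{λ,μ,t₀}(f₁,f₂)(x) > ξ}. Then: (i) Ω_ξ ≠ ℝⁿ; (ii) μ(Ω_ξ) < ∞; and (iii) Ω_ξ is an open set (indeed, x ↦ g^*_{λ,μ,t₀}(f₁,f₂)(x) is continuous and tends to 0 as |x| → ∞). -/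
open MeasureTheory Metric Set
open scoped ENNReal NNReal BigOperators

noncomputable section

/-- We work on `ℝⁿ` with the euclidean metric. -/
abbrev Rn (n : ℕ) := EuclideanSpace ℝ (Fin n)

variable {n : ℕ}

/-- An axis-parallel cube in `ℝⁿ`, given by its center and (positive) side length. -/
structure Cube (n : ℕ) where
  center : Rn n
  side : ℝ
  side_pos : 0 < side

/-- The concentric dilation `aQ` of a cube `Q`, as a subset of `ℝⁿ`. -/
def Cube.dilate (Q : Cube n) (a : ℝ) : Set (Rn n) :=
  {x | ∀ i, |x i - Q.center i| ≤ a * Q.side / 2}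

/-- The cube `Q` as a subset of `ℝⁿ`. -/
def Cube.carrier (Q : Cube n) : Set (Rn n) := Q.dilate 1

/-- `μ` is power bounded of order `m` with constant `Cμ`: `μ(B(x,r)) ≤ Cμ rᵐ`. -/
def IsPowerBounded (μ : Measure (Rn n)) (m Cμ : ℝ) : Prop :=
  ∀ x r, 0 < r → μ (ball x r) ≤ ENNReal.ofReal (Cμ * r ^ m)

/-- `Q` is an `(a,b)`-doubling cube for `μ`: `μ(aQ) ≤ b μ(Q)`. -/
def IsDoubling (μ : Measure (Rn n)) (Q : Cube n) (a b : ℝ) : Prop :=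
  μ (Q.dilate a) ≤ ENNReal.ofReal b * μ Q.carrier

/-- `Q` has `c`-small boundary with respect to `μ`. -/
def HasSmallBoundary (μ : Measure (Rn n)) (Q : Cube n) (c : ℝ) : Prop :=
  ∀ ξ : ℝ, 0 < ξ →
    μ {x ∈ Q.dilate 2 | infDist x (frontier Q.carrier) ≤ ξ * Q.side}
      ≤ ENNReal.ofReal (c * ξ) * μ (Q.dilate 2)

/-- A `κ`-linear Littlewood–Paley kernel with exponent `α` and constant `A`. -/
structure IsLPKernel (κ : ℕ) (m α A : ℝ)
    (s : ℝ → Rn n → (Fin κ → Rn n) → ℂ) : Prop where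
  size : ∀ t x y, 0 < t →
    ‖s t x y‖ ≤ A * t ^ ((κ : ℝ) * α) * ∏ i, (t + dist x (y i)) ^ (-(m + α))
  holder_x : ∀ t x x' y, 0 < t → dist x x' < t / 2 →
    ‖s t x y - s t x' y‖ ≤
      A * t ^ (((κ : ℝ) - 1) * α) * dist x x' ^ α * ∏ i, (t + dist x (y i)) ^ (-(m + α))
  holder_y : ∀ t x y (i : Fin κ) y', 0 < t → dist (y i) y' < t / 2 →
    ‖s t x y - s t x (Function.update y i y')‖ ≤
      A * t ^ (((κ : ℝ) - 1) * α) * dist (y i) y' ^ α * ∏ j, (t + dist x (y j)) ^ (-(m + α))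

/-- A bilinear Littlewood–Paley kernel with exponent `α` and constant `A`. -/
structure IsLPKernel2 (m α A : ℝ) (s : ℝ → Rn n → Rn n → Rn n → ℂ) : Prop where
  size : ∀ t x y₁ y₂, 0 < t →
    ‖s t x y₁ y₂‖ ≤
      A * t ^ (2 * α) * (t + dist x y₁) ^ (-(m + α)) * (t + dist x y₂) ^ (-(m + α))
  holder_x : ∀ t x x' y₁ y₂, 0 < t → dist x x' < t / 2 →
    ‖s t x y₁ y₂ - s t x' y₁ y₂‖ ≤
      A * t ^ α * dist x x' ^ α * (t + dist x y₁) ^ (-(m + α)) * (t + dist x y₂) ^ (-(m + α))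
  holder_y1 : ∀ t x y₁ y₁' y₂, 0 < t → dist y₁ y₁' < t / 2 →
    ‖s t x y₁ y₂ - s t x y₁' y₂‖ ≤
      A * t ^ α * dist y₁ y₁' ^ α * (t + dist x y₁) ^ (-(m + α)) * (t + dist x y₂) ^ (-(m + α))
  holder_y2 : ∀ t x y₁ y₂ y₂', 0 < t → dist y₂ y₂' < t / 2 →
    ‖s t x y₁ y₂ - s t x y₁ y₂'‖ ≤
      A * t ^ α * dist y₂ y₂' ^ α * (t + dist x y₁) ^ (-(m + α)) * (t + dist x y₂) ^ (-(m + α))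

/-- `Θ_t^μ(f₁,…,f_κ)(y)` for a `κ`-linear kernel and functions `f i`. -/
def Theta (μ : Measure (Rn n)) {κ : ℕ} (s : ℝ → Rn n → (Fin κ → Rn n) → ℂ)
    (f : Fin κ → Rn n → ℂ) (t : ℝ) (y : Rn n) : ℂ :=
  ∫ z : Fin κ → Rn n, s t y z * ∏ i, f i (z i) ∂Measure.pi (fun _ => μ)

/-- `Θ_t^μ(f₁,f₂)(y)` for a bilinear kernel. -/
def Theta2 (μ : Measure (Rn n)) (s : ℝ → Rn n → Rn n → Rn n → ℂ)
    (f₁ f₂ : Rn n → ℂ) (t : ℝ) (y : Rn n) : ℂ :=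
  ∫ z₁, (∫ z₂, s t y z₁ z₂ * f₁ z₁ * f₂ z₂ ∂μ) ∂μ

/-- The inner `y`-integral `∫ (t/(t+|x-y|))^{mλ} |Θ_t(y)|² dμ(y)` of a `g`-function. -/
def gKer (μ : Measure (Rn n)) (m lam : ℝ) (Θ : ℝ → Rn n → ℂ) (t : ℝ) (x : Rn n) : ℝ≥0∞ :=
  ∫⁻ y, ENNReal.ofReal ((t / (t + dist x y)) ^ (m * lam)) * (‖Θ t y‖₊ : ℝ≥0∞) ^ 2 ∂μ

/-- `(∫_I ∫ (t/(t+|x-y|))^{mλ} |Θ_t(y)|² dμ(y) dt/t^{m+1})^{1/2}`. -/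
def gAux (μ : Measure (Rn n)) (m lam : ℝ) (Θ : ℝ → Rn n → ℂ) (I : Set ℝ) (x : Rn n) : ℝ≥0∞ :=
  (∫⁻ t in I, gKer μ m lam Θ t x / ENNReal.ofReal (t ^ (m + 1))) ^ ((1 : ℝ) / 2)

/-- The `κ`-linear Littlewood–Paley–Stein function `g^*_{λ,μ}(f⃗)(x)`. -/
def gstar (μ : Measure (Rn n)) {κ : ℕ} (m lam : ℝ) (s : ℝ → Rn n → (Fin κ → Rn n) → ℂ)
    (f : Fin κ → Rn n → ℂ) (x : Rn n) : ℝ≥0∞ :=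
  gAux μ m lam (Theta μ s f) (Ioi 0) x

/-- The local version `g^*_{λ,μ,Q}`: the `t`-integral is restricted to `0 < t < ℓ(Q)`. -/
def gstarLoc (μ : Measure (Rn n)) {κ : ℕ} (m lam : ℝ) (s : ℝ → Rn n → (Fin κ → Rn n) → ℂ)
    (f : Fin κ → Rn n → ℂ) (Q : Cube n) (x : Rn n) : ℝ≥0∞ :=
  gAux μ m lam (Theta μ s f) (Ioo 0 Q.side) x

/-- The bilinear `g^*_{λ,μ}(f₁,f₂)(x)`. -/
def gstar2 (μ : Measure (Rn n)) (m lam : ℝ) (s : ℝ → Rn n → Rn n → Rn n → ℂ)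
    (f₁ f₂ : Rn n → ℂ) (x : Rn n) : ℝ≥0∞ :=
  gAux μ m lam (Theta2 μ s f₁ f₂) (Ioi 0) x

/-- The `t₀`-truncated bilinear `g^*_{λ,μ,t₀}(f₁,f₂)(x)`. -/
def gstar2T (μ : Measure (Rn n)) (m lam : ℝ) (s : ℝ → Rn n → Rn n → Rn n → ℂ)
    (f₁ f₂ : Rn n → ℂ) (t₀ : ℝ) (x : Rn n) : ℝ≥0∞ :=
  gAux μ m lam (Theta2 μ s f₁ f₂) (Ioi t₀) x

namespace CM

variable {X : Type*} [MeasurableSpace X]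

/-- The four nonnegative parts of a complex measure:
`ν = (parts ν 0 - parts ν 1) + i (parts ν 2 - parts ν 3)`. -/
def parts (ν : ComplexMeasure X) : Fin 4 → Measure X :=
  ![(ComplexMeasure.re ν).toJordanDecomposition.posPart,
    (ComplexMeasure.re ν).toJordanDecomposition.negPart,
    (ComplexMeasure.im ν).toJordanDecomposition.posPart,
    (ComplexMeasure.im ν).toJordanDecomposition.negPart]

/-- The coefficients matching `parts`. -/
def coef : Fin 4 → ℂ := ![1, -1, Complex.I, -Complex.I]

/-- The variation measure of a complex measure (sum of the total variations of the real and
imaginary parts; comparable to the usual total variation `|ν|`). -/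
def var (ν : ComplexMeasure X) : Measure X :=
  (ComplexMeasure.re ν).totalVariation + (ComplexMeasure.im ν).totalVariation

/-- The total variation norm `‖ν‖` of a complex measure. -/
def norm (ν : ComplexMeasure X) : ℝ := (var ν Set.univ).toReal

/-- Integral of a (complex-valued) function against a signed measure. -/
def sint (ρ : SignedMeasure X) (f : X → ℂ) : ℂ :=
  ∫ x, f x ∂ρ.toJordanDecomposition.posPart - ∫ x, f x ∂ρ.toJordanDecomposition.negPart

/-- Integral of a function against a complex measure. -/
def cint (ν : ComplexMeasure X) (f : X → ℂ) : ℂ :=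
  sint (ComplexMeasure.re ν) f + Complex.I * sint (ComplexMeasure.im ν) f

end CM

/-- `Θ_t(ν₁,…,ν_κ)(y)`: the `κ`-linear form applied to complex measures, written via the
decomposition of each `ν i` into its four nonnegative parts. -/
def ThetaM {κ : ℕ} (s : ℝ → Rn n → (Fin κ → Rn n) → ℂ)
    (ν : Fin κ → ComplexMeasure (Rn n)) (t : ℝ) (y : Rn n) : ℂ :=
  ∑ ε : Fin κ → Fin 4, (∏ i, CM.coef (ε i)) *
    ∫ z : Fin κ → Rn n, s t y z ∂Measure.pi (fun i => CM.parts (ν i) (ε i))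

/-- `g^*_λ(ν₁,…,ν_κ)(x)` for complex measures. -/
def gstarM (μ : Measure (Rn n)) {κ : ℕ} (m lam : ℝ) (s : ℝ → Rn n → (Fin κ → Rn n) → ℂ)
    (ν : Fin κ → ComplexMeasure (Rn n)) (x : Rn n) : ℝ≥0∞ :=
  gAux μ m lam (ThetaM s ν) (Ioi 0) x

/-- `Θ_t(ν₁,ν₂)(y)` for complex measures and a bilinear kernel. -/
def Theta2M (s : ℝ → Rn n → Rn n → Rn n → ℂ) (ν₁ ν₂ : ComplexMeasure (Rn n))
    (t : ℝ) (y : Rn n) : ℂ :=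
  CM.cint ν₁ (fun z₁ => CM.cint ν₂ (fun z₂ => s t y z₁ z₂))

/-- Bilinear `g_λ^*(ν₁,ν₂)(x)` for complex measures. -/
def gstar2M (μ : Measure (Rn n)) (m lam : ℝ) (s : ℝ → Rn n → Rn n → Rn n → ℂ)
    (ν₁ ν₂ : ComplexMeasure (Rn n)) (x : Rn n) : ℝ≥0∞ :=
  gAux μ m lam (Theta2M s ν₁ ν₂) (Ioi 0) x

/-- `Θ_t(ν, gμ)(y)`: mixed bilinear form with a complex measure in the first slot and the
measure `g·μ` in the second slot. -/
def Theta2Mix (μ : Measure (Rn n)) (s : ℝ → Rn n → Rn n → Rn n → ℂ)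
    (ν : ComplexMeasure (Rn n)) (g : Rn n → ℂ) (t : ℝ) (y : Rn n) : ℂ :=
  CM.cint ν (fun z₁ => ∫ z₂, s t y z₁ z₂ * g z₂ ∂μ)

/-- `g_λ^*(ν, gμ)(x)`. -/
def gstar2Mix (μ : Measure (Rn n)) (m lam : ℝ) (s : ℝ → Rn n → Rn n → Rn n → ℂ)
    (ν : ComplexMeasure (Rn n)) (g : Rn n → ℂ) (x : Rn n) : ℝ≥0∞ :=
  gAux μ m lam (Theta2Mix μ s ν g) (Ioi 0) x

/-- The modified Hardy–Littlewood maximal operator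
`M_μ f(x) = sup_{Q ∋ x} μ(2Q)⁻¹ ∫_Q |f| dμ`. -/
def Mmu (μ : Measure (Rn n)) (f : Rn n → ℂ) (x : Rn n) : ℝ≥0∞ :=
  ⨆ (Q : Cube n) (_ : x ∈ Q.carrier),
    (∫⁻ z in Q.carrier, (‖f z‖₊ : ℝ≥0∞) ∂μ) / μ (Q.dilate 2)

/-- A dyadic cube `2^k([0,1)ⁿ + pos)` of the standard dyadic lattice `𝒟` of `ℝⁿ`. -/
structure DyadicCube (n : ℕ) where
  k : ℤ
  pos : Fin n → ℤ

namespace DyadicCube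

/-- The side length `ℓ(Q) = 2^k`. -/
def side (Q : DyadicCube n) : ℝ := (2 : ℝ) ^ Q.k

/-- The (half-open) dyadic cube as a subset of `ℝⁿ`. -/
def carrier (Q : DyadicCube n) : Set (Rn n) :=
  {x | ∀ i, (Q.pos i : ℝ) * Q.side ≤ x i ∧ x i < ((Q.pos i : ℝ) + 1) * Q.side}

/-- The closed dyadic cube as a subset of `ℝⁿ`. -/
def closedCarrier (Q : DyadicCube n) : Set (Rn n) :=
  {x | ∀ i, (Q.pos i : ℝ) * Q.side ≤ x i ∧ x i ≤ ((Q.pos i : ℝ) + 1) * Q.side}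

/-- The center of a dyadic cube. -/
def center (Q : DyadicCube n) : Rn n := WithLp.toLp 2 (fun i => ((Q.pos i : ℝ) + 1 / 2) * Q.side)

/-- The concentric dilation `aQ` of a dyadic cube, as a (closed) subset of `ℝⁿ`. -/
def dilate (Q : DyadicCube n) (a : ℝ) : Set (Rn n) :=
  {x | ∀ i, |x i - Q.center i| ≤ a * Q.side / 2}

/-- The dyadic child of `Q` selected by `ε`. -/
def child (Q : DyadicCube n) (ε : Fin n → Bool) : DyadicCube n :=
  ⟨Q.k - 1, fun i => 2 * Q.pos i + (if ε i then 1 else 0)⟩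

end DyadicCube

/-- The unique dyadic cube of generation `k` (side `2^k`) containing `x`. -/
def dyadicAt (k : ℤ) (x : Rn n) : DyadicCube n := ⟨k, fun i => ⌊x i / (2 : ℝ) ^ k⌋⟩

/-- The average `⟨f⟩_Q = μ(Q)⁻¹ ∫_Q f dμ` (zero if `μ(Q)` is `0` or `∞`). -/
def avg (μ : Measure (Rn n)) (Q : DyadicCube n) (f : Rn n → ℂ) : ℂ :=
  (μ Q.carrier).toReal⁻¹ • ∫ z in Q.carrier, f z ∂μ

/-- The martingale difference `Δ_Q f = ∑_{Q' ∈ ch(Q)} (⟨f⟩_{Q'} - ⟨f⟩_Q) 1_{Q'}`. -/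
def deltaQ (μ : Measure (Rn n)) (Q : DyadicCube n) (f : Rn n → ℂ) (x : Rn n) : ℂ :=
  ∑ ε : Fin n → Bool,
    Set.indicator (Q.child ε).carrier (fun _ => avg μ (Q.child ε) f - avg μ Q f) x

/-- The averaging operator `E_{2^k} f = ∑_{Q ∈ 𝒟, ℓ(Q) = 2^k} ⟨f⟩_Q 1_Q`. -/
def Ek (μ : Measure (Rn n)) (k : ℤ) (f : Rn n → ℂ) (x : Rn n) : ℂ :=
  avg μ (dyadicAt k x) f

/-- The dyadic maximal operator `M_𝒟 f(x) = sup_{Q ∈ 𝒟, Q ∋ x} μ(Q)⁻¹ ∫_Q |f| dμ`. -/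
def Mdyadic (μ : Measure (Rn n)) (f : Rn n → ℂ) (x : Rn n) : ℝ≥0∞ :=
  ⨆ (Q : DyadicCube n) (_ : x ∈ Q.carrier),
    (∫⁻ z in Q.carrier, (‖f z‖₊ : ℝ≥0∞) ∂μ) / μ Q.carrier

/-- The maximal operator `M_m g(x) = sup_{ρ>0} ρ^{-m} ∫_{B(x,ρ)} g dμ`. -/
def Mm (μ : Measure (Rn n)) (m : ℝ) (g : Rn n → ℝ≥0∞) (x : Rn n) : ℝ≥0∞ :=
  ⨆ (ρ : ℝ) (_ : 0 < ρ), (∫⁻ z in ball x ρ, g z ∂μ) / ENNReal.ofReal (ρ ^ m)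

/-- The distance between two sets. -/
def setDist (S T : Set (Rn n)) : ℝ := (⨅ (x ∈ S) (y ∈ T), edist x y).toReal

/-- The long distance `D(Q,R) = ℓ(Q) + ℓ(R) + dist(Q,R)` between dyadic cubes. -/
def Dlong (Q R : DyadicCube n) : ℝ := Q.side + R.side + setDist Q.carrier R.carrier

/-- `δ(Q,R) = ℓ(Q)^{α/2} ℓ(R)^{α/2} / D(Q,R)^{m+α}`. -/
def deltaCoef (α m : ℝ) (Q R : DyadicCube n) : ℝ :=
  Q.side ^ (α / 2) * R.side ^ (α / 2) / Dlong Q R ^ (m + α)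

/-- The `L^p(μ)` norm of an `ℝ≥0∞`-valued function. -/
def lpNormE (μ : Measure (Rn n)) (p : ℝ) (g : Rn n → ℝ≥0∞) : ℝ≥0∞ :=
  (∫⁻ x, g x ^ p ∂μ) ^ (1 / p)


section Lemma32Proof

/-- If `b ≤ a + R`, then `(t+a)^{-p} ≤ (1+R/t₀)^p (t+b)^{-p}` for `t ≥ t₀ > 0`. -/
private lemma key_inv {t₀ t R p a b : ℝ} (ht₀ : 0 < t₀) (ht : t₀ ≤ t) (hR : 0 ≤ R)
    (hp : 0 ≤ p) (ha : 0 ≤ a) (hb : 0 ≤ b) (hba : b ≤ a + R) :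
    (t + a) ^ (-p) ≤ (1 + R / t₀) ^ p * (t + b) ^ (-p) := by
  have ht0 : 0 < t := lt_of_lt_of_le ht₀ ht
  have hta : 0 < t + a := by linarith
  have htb : 0 < t + b := by linarith
  have hc : (0:ℝ) < 1 + R / t₀ := by positivity
  have h1 : t + b ≤ (t + a) * (1 + R / t₀) := by
    have e : t₀ * (R / t₀) = R := by field_simp
    nlinarith [mul_le_mul_of_nonneg_right (show t₀ ≤ t + a by linarith)
      (div_nonneg hR ht₀.le)]
  have h2 : (t + b) ^ p ≤ (t + a) ^ p * (1 + R / t₀) ^ p := by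
    rw [← Real.mul_rpow hta.le hc.le]
    exact Real.rpow_le_rpow htb.le h1 hp
  have hpa : (0:ℝ) < (t + a) ^ p := Real.rpow_pos_of_pos hta p
  have hpb : (0:ℝ) < (t + b) ^ p := Real.rpow_pos_of_pos htb p
  rw [Real.rpow_neg hta.le, Real.rpow_neg htb.le, ← div_eq_mul_inv, le_div_iff₀ hpb,
    inv_mul_eq_div, div_le_iff₀ hpa]
  nlinarith [h2]

/-- Master weight estimate: `(t/(t+|x-y|))^{mλ} (t+|y|)^{-(m+α)} ≤ 2^{m+α} (t+|x|)^{-m} t^{-α}`. -/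
private lemma weight_split {m lam α t dxy dy0 D : ℝ} (hm : 0 < m) (hα : 0 < α)
    (hlam : 1 ≤ lam) (ht : 0 < t) (hdxy : 0 ≤ dxy) (hdy0 : 0 ≤ dy0) (hD : 0 ≤ D)
    (htri : D ≤ dxy + dy0) :
    (t / (t + dxy)) ^ (m * lam) * (t + dy0) ^ (-(m + α)) ≤
      2 ^ (m + α) * (t + D) ^ (-m) * t ^ (-α) := by
  have hbase0 : 0 ≤ t / (t + dxy) := by positivity
  have hbase1 : t / (t + dxy) ≤ 1 := by
    rw [div_le_one (by linarith)]; linarith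
  have h2mα : (2:ℝ) ^ m ≤ 2 ^ (m + α) :=
    Real.rpow_le_rpow_of_exponent_le one_le_two (by linarith)
  rcases le_or_gt dy0 (D / 2) with hnear | hfar
  · -- near: dxy ≥ D/2
    have hdxyD : D / 2 ≤ dxy := by linarith
    have hw : (t / (t + dxy)) ^ (m * lam) ≤ (t / (t + D / 2)) ^ m := by
      calc (t / (t + dxy)) ^ (m * lam) ≤ (t / (t + dxy)) ^ m := by
            apply Real.rpow_le_rpow_of_exponent_ge' hbase0 hbase1 hm.le
            nlinarith
        _ ≤ (t / (t + D / 2)) ^ m := by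
            apply Real.rpow_le_rpow hbase0 ?_ hm.le
            apply div_le_div_of_nonneg_left ht.le (by linarith) (by linarith)
    have hw2 : (t / (t + D / 2)) ^ m ≤ 2 ^ m * t ^ m * (t + D) ^ (-m) := by
      have h5 : t / (t + D / 2) ≤ 2 * t / (t + D) := by
        rw [div_le_div_iff₀ (by linarith) (by linarith)]; nlinarith
      calc (t / (t + D / 2)) ^ m ≤ (2 * t / (t + D)) ^ m :=
            Real.rpow_le_rpow (by positivity) h5 hm.le
        _ = 2 ^ m * t ^ m * (t + D) ^ (-m) := by
            rw [Real.div_rpow (by positivity) (by linarith), Real.mul_rpow (by norm_num) ht.le,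
              Real.rpow_neg (by linarith), div_eq_mul_inv]
    have hy : (t + dy0) ^ (-(m + α)) ≤ t ^ (-(m + α)) := by
      rw [Real.rpow_neg (by linarith), Real.rpow_neg ht.le]
      apply inv_anti₀ (Real.rpow_pos_of_pos ht _)
      exact Real.rpow_le_rpow ht.le (by linarith) (by linarith)
    have e : 2 ^ m * t ^ m * (t + D) ^ (-m) * t ^ (-(m + α)) =
        2 ^ m * (t + D) ^ (-m) * t ^ (-α) := by
      rw [mul_assoc, mul_assoc, mul_comm ((t+D) ^ (-m)) _, ← mul_assoc (t ^ m),
        ← Real.rpow_add ht, ← mul_assoc]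
      ring_nf
    calc (t / (t + dxy)) ^ (m * lam) * (t + dy0) ^ (-(m + α))
        ≤ (2 ^ m * t ^ m * (t + D) ^ (-m)) * t ^ (-(m + α)) := by
          apply mul_le_mul (hw.trans hw2) hy (by positivity) (by positivity)
      _ = 2 ^ m * (t + D) ^ (-m) * t ^ (-α) := by
          rw [mul_assoc (2 ^ m), mul_assoc (2 ^ m), mul_assoc (2 ^ m)]
          congr 1
          rw [mul_comm (t ^ m), mul_assoc, ← Real.rpow_add ht]
          congr 1
          ring_nf
      _ ≤ 2 ^ (m + α) * (t + D) ^ (-m) * t ^ (-α) := by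
          have : (0:ℝ) ≤ (t + D) ^ (-m) * t ^ (-α) := by positivity
          nlinarith [mul_le_mul_of_nonneg_right h2mα this]
  · -- far: dy0 > D/2
    have hw1 : (t / (t + dxy)) ^ (m * lam) ≤ 1 :=
      Real.rpow_le_one hbase0 hbase1 (by nlinarith)
    have hy : (t + dy0) ^ (-(m + α)) ≤ (t + D / 2) ^ (-(m + α)) := by
      rw [Real.rpow_neg (by linarith), Real.rpow_neg (by linarith)]
      apply inv_anti₀ (Real.rpow_pos_of_pos (by linarith) _)
      exact Real.rpow_le_rpow (by linarith) (by linarith) (by linarith)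
    have hsplit : (t + D / 2) ^ (-(m + α)) ≤ 2 ^ m * (t + D) ^ (-m) * t ^ (-α) := by
      have e1 : (t + D / 2) ^ (-(m + α)) = (t + D / 2) ^ (-m) * (t + D / 2) ^ (-α) := by
        rw [← Real.rpow_add (by linarith)]; ring_nf
      have h6 : (t + D / 2) ^ (-m) ≤ 2 ^ m * (t + D) ^ (-m) := by
        have h7 : (t + D) / 2 ≤ t + D / 2 := by linarith
        have : (t + D) ^ m ≤ (t + D / 2) ^ m * 2 ^ m := by
          rw [← Real.mul_rpow (by linarith) (by norm_num)]
          exact Real.rpow_le_rpow (by linarith) (by linarith) hm.le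
        rw [Real.rpow_neg (by linarith), Real.rpow_neg (by linarith), ← div_eq_mul_inv,
          le_div_iff₀ (Real.rpow_pos_of_pos (by linarith) _), inv_mul_eq_div,
          div_le_iff₀ (Real.rpow_pos_of_pos (by linarith) _)]
        nlinarith [this]
      have h8 : (t + D / 2) ^ (-α) ≤ t ^ (-α) := by
        rw [Real.rpow_neg (by linarith), Real.rpow_neg ht.le]
        apply inv_anti₀ (Real.rpow_pos_of_pos ht _)
        exact Real.rpow_le_rpow ht.le (by linarith) hα.le
      calc (t + D / 2) ^ (-(m + α)) = (t + D / 2) ^ (-m) * (t + D / 2) ^ (-α) := e1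
        _ ≤ (2 ^ m * (t + D) ^ (-m)) * t ^ (-α) :=
            mul_le_mul h6 h8 (by positivity) (by positivity)
        _ = 2 ^ m * (t + D) ^ (-m) * t ^ (-α) := by ring
    calc (t / (t + dxy)) ^ (m * lam) * (t + dy0) ^ (-(m + α))
        ≤ 1 * ((t + D / 2) ^ (-(m + α))) := mul_le_mul hw1 hy (by positivity) one_pos.le
      _ = (t + D / 2) ^ (-(m + α)) := one_mul _
      _ ≤ 2 ^ m * (t + D) ^ (-m) * t ^ (-α) := hsplit
      _ ≤ 2 ^ (m + α) * (t + D) ^ (-m) * t ^ (-α) := by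
          have : (0:ℝ) ≤ (t + D) ^ (-m) * t ^ (-α) := by positivity
          nlinarith [mul_le_mul_of_nonneg_right h2mα this]

private lemma lemA {n : ℕ} (μ : Measure (Rn n)) {m Cμ : ℝ} (hm : 0 < m) (hCμ : 0 ≤ Cμ)
    (hμ : IsPowerBounded μ m Cμ) {β : ℝ} (hβ : m < β) :
    ∃ c : ℝ≥0∞, c ≠ ⊤ ∧ ∀ (x : Rn n) (t : ℝ), 0 < t →
      (∫⁻ y, ENNReal.ofReal ((t / (t + dist x y)) ^ β) ∂μ) ≤ c * ENNReal.ofReal (t ^ m) := by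
  set q : ℝ := (2:ℝ) ^ (m - β) with hq
  have hq0 : 0 < q := Real.rpow_pos_of_pos two_pos _
  have hq1 : q < 1 := Real.rpow_lt_one_of_one_lt_of_neg one_lt_two (by linarith)
  have hgeom : (1 - ENNReal.ofReal q)⁻¹ ≠ ⊤ := by
    rw [ENNReal.inv_ne_top]
    exact (tsub_pos_of_lt (ENNReal.ofReal_lt_one.mpr hq1)).ne'
  refine ⟨ENNReal.ofReal Cμ + ENNReal.ofReal (Cμ * 2 ^ m) * (1 - ENNReal.ofReal q)⁻¹, ?_, ?_⟩
  · exact ENNReal.add_ne_top.mpr ⟨ENNReal.ofReal_ne_top,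
      ENNReal.mul_ne_top ENNReal.ofReal_ne_top hgeom⟩
  intro x t ht
  set S : ℕ → Set (Rn n) := fun j => ball x ((2:ℝ) ^ (j + 1) * t) \ ball x ((2:ℝ) ^ j * t)
    with hS
  have hcover : (univ : Set (Rn n)) ⊆ ball x t ∪ ⋃ j, S j := by
    intro y _
    by_cases hy : y ∈ ball x t
    · exact Or.inl hy
    · right
      have hd : t ≤ dist y x := by
        simpa [mem_ball, not_lt] using hy
      have hex : ∃ j : ℕ, dist y x < (2:ℝ) ^ (j + 1) * t := by
        obtain ⟨k, hk⟩ := pow_unbounded_of_one_lt (dist y x / t) (one_lt_two (α := ℝ))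
        exact ⟨k, by rw [← div_lt_iff₀ ht] at *; calc dist y x / t < 2 ^ k := hk
                     _ ≤ 2 ^ (k + 1) := by gcongr <;> norm_num⟩
      classical
      set j := Nat.find hex with hj
      refine mem_iUnion.mpr ⟨j, ?_, ?_⟩
      · simpa [mem_ball] using Nat.find_spec hex
      · simp only [mem_ball, not_lt]
        rcases Nat.eq_zero_or_pos j with h0 | hpos
        · simpa [h0] using hd
        · have := Nat.find_min hex (m := j - 1) (by omega)
          push_neg at this
          calc (2:ℝ) ^ j * t = 2 ^ (j - 1 + 1) * t := by congr 2; omega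
            _ ≤ dist y x := this
  have hball : (∫⁻ y in ball x t, ENNReal.ofReal ((t / (t + dist x y)) ^ β) ∂μ)
      ≤ ENNReal.ofReal Cμ * ENNReal.ofReal (t ^ m) := by
    calc (∫⁻ y in ball x t, ENNReal.ofReal ((t / (t + dist x y)) ^ β) ∂μ)
        ≤ ∫⁻ _ in ball x t, 1 ∂μ := by
          apply setLIntegral_mono' measurableSet_ball
          intro y _
          simp only [← ENNReal.ofReal_one]
          apply ENNReal.ofReal_le_ofReal
          apply Real.rpow_le_one (by positivity) ?_ (by linarith)
          rw [div_le_one (lt_of_lt_of_le ht (le_add_of_nonneg_right dist_nonneg))]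
          linarith [@dist_nonneg _ _ x y]
      _ = μ (ball x t) := by simp
      _ ≤ ENNReal.ofReal (Cμ * t ^ m) := hμ x t ht
      _ = ENNReal.ofReal Cμ * ENNReal.ofReal (t ^ m) :=
          ENNReal.ofReal_mul hCμ
  have hannuli : ∀ j : ℕ, (∫⁻ y in S j, ENNReal.ofReal ((t / (t + dist x y)) ^ β) ∂μ)
      ≤ (ENNReal.ofReal (Cμ * 2 ^ m) * ENNReal.ofReal (t ^ m)) * ENNReal.ofReal q ^ j := by
    intro j
    have hmeas : MeasurableSet (S j) := measurableSet_ball.diff measurableSet_ball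
    have hstep : ∀ y ∈ S j, ENNReal.ofReal ((t / (t + dist x y)) ^ β)
        ≤ ENNReal.ofReal ((((2:ℝ) ^ j)⁻¹) ^ β) := by
      intro y hy
      apply ENNReal.ofReal_le_ofReal
      apply Real.rpow_le_rpow (by positivity) ?_ (by linarith)
      have h1 : (2:ℝ) ^ j * t ≤ dist y x := by
        have := hy.2; simpa [mem_ball, not_lt] using this
      rw [div_le_iff₀ (lt_of_lt_of_le ht (le_add_of_nonneg_right dist_nonneg))]
      have h2 : (0:ℝ) < 2 ^ j := by positivity
      rw [inv_mul_eq_div, le_div_iff₀ h2]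
      rw [dist_comm] at h1
      nlinarith [@dist_nonneg _ _ x y]
    calc (∫⁻ y in S j, ENNReal.ofReal ((t / (t + dist x y)) ^ β) ∂μ)
        ≤ ∫⁻ _ in S j, ENNReal.ofReal ((((2:ℝ) ^ j)⁻¹) ^ β) ∂μ :=
          setLIntegral_mono' hmeas hstep
      _ = ENNReal.ofReal ((((2:ℝ) ^ j)⁻¹) ^ β) * μ (S j) := by
          rw [setLIntegral_const]
      _ ≤ ENNReal.ofReal ((((2:ℝ) ^ j)⁻¹) ^ β) * ENNReal.ofReal (Cμ * ((2:ℝ) ^ (j+1) * t) ^ m) :=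
          mul_le_mul_right (le_trans (measure_mono diff_subset)
            (hμ x _ (mul_pos (by positivity) ht))) _
      _ = (ENNReal.ofReal (Cμ * 2 ^ m) * ENNReal.ofReal (t ^ m)) * ENNReal.ofReal q ^ j := by
          rw [← ENNReal.ofReal_pow hq0.le, ← ENNReal.ofReal_mul (by positivity),
            ← ENNReal.ofReal_mul (by positivity), ← ENNReal.ofReal_mul (by positivity)]
          congr 1
          have e1 : (((2:ℝ) ^ j)⁻¹) ^ β = ((2:ℝ) ^ j) ^ (-β) := by
            rw [Real.inv_rpow (by positivity), ← Real.rpow_neg (by positivity)]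
          have e2 : ((2:ℝ) ^ (j+1) * t) ^ m = ((2:ℝ) ^ j) ^ m * 2 ^ m * t ^ m := by
            rw [Real.mul_rpow (by positivity) ht.le, pow_succ,
              Real.mul_rpow (by positivity) (by norm_num)]
          have e3 : ((2:ℝ) ^ j) ^ (-β) * ((2:ℝ) ^ j) ^ m = q ^ j := by
            rw [← Real.rpow_natCast (2:ℝ) j, ← Real.rpow_mul (by norm_num),
              ← Real.rpow_mul (by norm_num), ← Real.rpow_add two_pos, hq,
              ← Real.rpow_natCast ((2:ℝ) ^ (m - β)) j, ← Real.rpow_mul (by norm_num)]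
            ring_nf
          calc (((2:ℝ) ^ j)⁻¹) ^ β * (Cμ * ((2:ℝ) ^ (j+1) * t) ^ m)
              = ((2:ℝ) ^ j) ^ (-β) * ((2:ℝ) ^ j) ^ m * (Cμ * 2 ^ m * t ^ m) := by
                rw [e1, e2]; ring
            _ = Cμ * 2 ^ m * t ^ m * q ^ j := by rw [e3]; ring
  calc (∫⁻ y, ENNReal.ofReal ((t / (t + dist x y)) ^ β) ∂μ)
      = ∫⁻ y in univ, ENNReal.ofReal ((t / (t + dist x y)) ^ β) ∂μ := by
        rw [setLIntegral_univ]
    _ ≤ ∫⁻ y in ball x t ∪ ⋃ j, S j, ENNReal.ofReal ((t / (t + dist x y)) ^ β) ∂μ :=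
        lintegral_mono_set hcover
    _ ≤ (∫⁻ y in ball x t, ENNReal.ofReal ((t / (t + dist x y)) ^ β) ∂μ)
        + ∫⁻ y in ⋃ j, S j, ENNReal.ofReal ((t / (t + dist x y)) ^ β) ∂μ :=
        lintegral_union_le _ _ _
    _ ≤ ENNReal.ofReal Cμ * ENNReal.ofReal (t ^ m)
        + ∑' j, ∫⁻ y in S j, ENNReal.ofReal ((t / (t + dist x y)) ^ β) ∂μ :=
        add_le_add hball (lintegral_iUnion_le _ _)
    _ ≤ ENNReal.ofReal Cμ * ENNReal.ofReal (t ^ m)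
        + ∑' j, (ENNReal.ofReal (Cμ * 2 ^ m) * ENNReal.ofReal (t ^ m)) * ENNReal.ofReal q ^ j :=
        add_le_add_right (ENNReal.tsum_le_tsum (fun j => hannuli j)) _
    _ = ENNReal.ofReal Cμ * ENNReal.ofReal (t ^ m)
        + (ENNReal.ofReal (Cμ * 2 ^ m) * ENNReal.ofReal (t ^ m)) * (1 - ENNReal.ofReal q)⁻¹ := by
        rw [ENNReal.tsum_mul_left, ENNReal.tsum_geometric]
    _ = (ENNReal.ofReal Cμ + ENNReal.ofReal (Cμ * 2 ^ m) * (1 - ENNReal.ofReal q)⁻¹)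
        * ENNReal.ofReal (t ^ m) := by ring

private lemma thetaBound {n : ℕ} (μ : Measure (Rn n)) {m α A Cμ t₀ : ℝ}
    (s : ℝ → Rn n → Rn n → Rn n → ℂ) (f₁ f₂ : Rn n → ℂ)
    (hm : 0 < m) (hα : 0 < α) (hμ : IsPowerBounded μ m Cμ)
    (hker : IsLPKernel2 m α A s) (ht₀ : 0 < t₀)
    (hbd₁ : ∃ M, ∀ x, ‖f₁ x‖ ≤ M) (hbd₂ : ∃ M, ∀ x, ‖f₂ x‖ ≤ M)
    (hsupp₁ : HasCompactSupport f₁) (hsupp₂ : HasCompactSupport f₂) :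
    ∃ B : ℝ, 0 ≤ B ∧ ∀ t y, t₀ ≤ t →
      ‖Theta2 μ s f₁ f₂ t y‖ ≤ B * t ^ (2*α) *
        ((t + dist y (0:Rn n)) ^ (-(m+α)) * (t + dist y (0:Rn n)) ^ (-(m+α))) := by
  obtain ⟨M₁, hM₁⟩ := hbd₁
  obtain ⟨M₂, hM₂⟩ := hbd₂
  set N₁ := max M₁ 0 with hN₁
  set N₂ := max M₂ 0 with hN₂
  have hN₁0 : 0 ≤ N₁ := le_max_right _ _
  have hN₂0 : 0 ≤ N₂ := le_max_right _ _
  have hf₁ : ∀ x, ‖f₁ x‖ ≤ N₁ := fun x => (hM₁ x).trans (le_max_left _ _)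
  have hf₂ : ∀ x, ‖f₂ x‖ ≤ N₂ := fun x => (hM₂ x).trans (le_max_left _ _)
  have hA : 0 ≤ A := by
    have := hker.size 1 0 0 0 one_pos
    simp only [dist_self, add_zero, Real.one_rpow, mul_one] at this
    exact le_trans (norm_nonneg _) this
  obtain ⟨R₀, hR₀⟩ := (hsupp₁.isBounded.union hsupp₂.isBounded).subset_closedBall (0 : Rn n)
  set R := max R₀ 0 with hRdef
  have hR : 0 ≤ R := le_max_right _ _
  have hsub : tsupport f₁ ∪ tsupport f₂ ⊆ closedBall (0:Rn n) R :=
    hR₀.trans (closedBall_subset_closedBall (le_max_left _ _))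
  set c₀ := (1 + R / t₀) ^ (m + α) with hc₀def
  have hc₀ : 0 < c₀ := Real.rpow_pos_of_pos (by positivity) _
  have key : ∀ {t : ℝ}, t₀ ≤ t → ∀ (y z : Rn n), z ∈ closedBall (0:Rn n) R →
      (t + dist y z) ^ (-(m+α)) ≤ c₀ * (t + dist y (0:Rn n)) ^ (-(m+α)) := by
    intro t ht y z hz
    apply key_inv ht₀ ht hR (by linarith) dist_nonneg dist_nonneg
    calc dist y (0:Rn n) ≤ dist y z + dist z 0 := dist_triangle _ _ _
      _ ≤ dist y z + R := add_le_add_right (mem_closedBall.mp hz) _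
  set KE := μ (closedBall (0:Rn n) R) with hKEdef
  have hKE : KE ≠ ⊤ := by
    have h1 : KE ≤ μ (ball (0:Rn n) (R+1)) :=
      measure_mono (closedBall_subset_ball (by linarith))
    exact ne_top_of_le_ne_top (ne_top_of_le_ne_top ENNReal.ofReal_ne_top
      (hμ 0 (R+1) (by linarith))) h1
  set κ := KE.toReal with hκdef
  have hκ0 : 0 ≤ κ := ENNReal.toReal_nonneg
  refine ⟨A * c₀ * c₀ * N₁ * N₂ * κ * κ, by positivity, ?_⟩
  intro t y ht
  have ht0 : 0 < t := lt_of_lt_of_le ht₀ ht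
  set Q := (t + dist y (0:Rn n)) ^ (-(m+α)) with hQdef
  have hQ0 : 0 ≤ Q := Real.rpow_nonneg (by positivity) _
  have ht2α : 0 ≤ t ^ (2*α) := Real.rpow_nonneg ht0.le _
  -- inner bound
  have hinner : ∀ z₁ : Rn n, ‖∫ z₂, s t y z₁ z₂ * f₁ z₁ * f₂ z₂ ∂μ‖ ≤
      A * t ^ (2*α) * ((t + dist y z₁) ^ (-(m+α))) * (c₀ * Q) * N₁ * N₂ * κ := by
    intro z₁
    have hQz₁ : 0 ≤ (t + dist y z₁) ^ (-(m+α)) := Real.rpow_nonneg (by positivity) _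
    set c : ℝ := A * t ^ (2*α) * ((t + dist y z₁) ^ (-(m+α))) * (c₀ * Q) * N₁ * N₂ with hcdef
    have hc0 : 0 ≤ c := by positivity
    have hpt : ∀ z₂ : Rn n, ENNReal.ofReal ‖s t y z₁ z₂ * f₁ z₁ * f₂ z₂‖ ≤
        (tsupport f₂).indicator (fun _ => ENNReal.ofReal c) z₂ := by
      intro z₂
      by_cases hz₂ : z₂ ∈ tsupport f₂
      · rw [indicator_of_mem hz₂]
        apply ENNReal.ofReal_le_ofReal
        have h1 := hker.size t y z₁ z₂ ht0
        have h2 : (t + dist y z₂) ^ (-(m+α)) ≤ c₀ * Q :=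
          key ht y z₂ (hsub (mem_union_right _ hz₂))
        have h3 : ‖s t y z₁ z₂‖ ≤ A * t ^ (2*α) * ((t + dist y z₁) ^ (-(m+α))) * (c₀ * Q) :=
          h1.trans (mul_le_mul_of_nonneg_left h2
            (mul_nonneg (mul_nonneg hA ht2α) hQz₁))
        rw [norm_mul, norm_mul]
        calc ‖s t y z₁ z₂‖ * ‖f₁ z₁‖ * ‖f₂ z₂‖
            ≤ (A * t ^ (2*α) * ((t + dist y z₁) ^ (-(m+α))) * (c₀ * Q) * N₁) * N₂ := by
              apply mul_le_mul ?_ (hf₂ z₂) (norm_nonneg _) (by positivity)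
              exact mul_le_mul h3 (hf₁ z₁) (norm_nonneg _) (by positivity)
          _ = c := by rw [hcdef]
      · rw [indicator_of_notMem hz₂, image_eq_zero_of_notMem_tsupport hz₂]
        simp
    calc ‖∫ z₂, s t y z₁ z₂ * f₁ z₁ * f₂ z₂ ∂μ‖
        ≤ (∫⁻ z₂, ENNReal.ofReal ‖s t y z₁ z₂ * f₁ z₁ * f₂ z₂‖ ∂μ).toReal :=
          norm_integral_le_lintegral_norm _
      _ ≤ (ENNReal.ofReal c * KE).toReal := by
          apply ENNReal.toReal_mono (ENNReal.mul_ne_top ENNReal.ofReal_ne_top hKE)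
          calc (∫⁻ z₂, ENNReal.ofReal ‖s t y z₁ z₂ * f₁ z₁ * f₂ z₂‖ ∂μ)
              ≤ ∫⁻ z₂, (tsupport f₂).indicator (fun _ => ENNReal.ofReal c) z₂ ∂μ :=
                lintegral_mono hpt
            _ = ENNReal.ofReal c * μ (tsupport f₂) := by
                rw [lintegral_indicator (isClosed_tsupport f₂).measurableSet,
                  setLIntegral_const]
            _ ≤ ENNReal.ofReal c * KE := by
                exact mul_le_mul_right (measure_mono ((subset_union_right).trans hsub)) _
      _ = c * κ := by rw [ENNReal.toReal_mul, ENNReal.toReal_ofReal hc0]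
  -- outer bound
  set cout : ℝ := A * t ^ (2*α) * (c₀ * Q) * (c₀ * Q) * N₁ * N₂ * κ with hcoutdef
  have hcout0 : 0 ≤ cout := by positivity
  have hpt1 : ∀ z₁ : Rn n, ENNReal.ofReal ‖∫ z₂, s t y z₁ z₂ * f₁ z₁ * f₂ z₂ ∂μ‖ ≤
      (tsupport f₁).indicator (fun _ => ENNReal.ofReal cout) z₁ := by
    intro z₁
    by_cases hz₁ : z₁ ∈ tsupport f₁
    · rw [indicator_of_mem hz₁]
      apply ENNReal.ofReal_le_ofReal
      refine (hinner z₁).trans ?_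
      have h4 : (t + dist y z₁) ^ (-(m+α)) ≤ c₀ * Q :=
        key ht y z₁ (hsub (mem_union_left _ hz₁))
      have h5 : A * t ^ (2*α) * ((t + dist y z₁) ^ (-(m+α))) * (c₀ * Q) ≤
          A * t ^ (2*α) * (c₀ * Q) * (c₀ * Q) :=
        mul_le_mul_of_nonneg_right (mul_le_mul_of_nonneg_left h4
          (mul_nonneg hA ht2α)) (mul_nonneg hc₀.le hQ0)
      exact mul_le_mul_of_nonneg_right (mul_le_mul_of_nonneg_right
        (mul_le_mul_of_nonneg_right h5 hN₁0) hN₂0) hκ0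
    · rw [indicator_of_notMem hz₁]
      have : ∀ z₂, s t y z₁ z₂ * f₁ z₁ * f₂ z₂ = 0 := by
        intro z₂; rw [image_eq_zero_of_notMem_tsupport hz₁]; ring
      simp [this]
  calc ‖Theta2 μ s f₁ f₂ t y‖
      ≤ (∫⁻ z₁, ENNReal.ofReal ‖∫ z₂, s t y z₁ z₂ * f₁ z₁ * f₂ z₂ ∂μ‖ ∂μ).toReal :=
        norm_integral_le_lintegral_norm _
    _ ≤ (ENNReal.ofReal cout * KE).toReal := by
        apply ENNReal.toReal_mono (ENNReal.mul_ne_top ENNReal.ofReal_ne_top hKE)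
        calc (∫⁻ z₁, ENNReal.ofReal ‖∫ z₂, s t y z₁ z₂ * f₁ z₁ * f₂ z₂ ∂μ‖ ∂μ)
            ≤ ∫⁻ z₁, (tsupport f₁).indicator (fun _ => ENNReal.ofReal cout) z₁ ∂μ :=
              lintegral_mono hpt1
          _ = ENNReal.ofReal cout * μ (tsupport f₁) := by
              rw [lintegral_indicator (isClosed_tsupport f₁).measurableSet,
                setLIntegral_const]
          _ ≤ ENNReal.ofReal cout * KE := by
              exact mul_le_mul_right (measure_mono ((subset_union_left).trans hsub)) _
    _ = cout * κ := by rw [ENNReal.toReal_mul, ENNReal.toReal_ofReal hcout0]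
    _ = A * c₀ * c₀ * N₁ * N₂ * κ * κ * t ^ (2*α) * (Q * Q) := by
        rw [hcoutdef]; ring

private lemma rpow_neg_base_anti {a b p : ℝ} (ha : 0 < a) (hab : a ≤ b) (hp : 0 ≤ p) :
    b ^ (-p) ≤ a ^ (-p) := by
  have hb : 0 < b := lt_of_lt_of_le ha hab
  rw [Real.rpow_neg hb.le, Real.rpow_neg ha.le]
  exact inv_anti₀ (Real.rpow_pos_of_pos ha p) (Real.rpow_le_rpow ha.le hab hp)

private lemma div_rpow_neg_eq {t d p : ℝ} (ht : 0 < t) (hd : 0 ≤ d) :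
    (t / (t + d)) ^ p = t ^ p * (t + d) ^ (-p) := by
  rw [Real.div_rpow ht.le (by linarith), Real.rpow_neg (by linarith), div_eq_mul_inv]

/-- Master bound: the truncated square function integral is `≲ (t₀+|x|)^{-m}`. -/
private lemma masterBound {n : ℕ} (μ : Measure (Rn n)) {m lam α A Cμ t₀ : ℝ}
    (s : ℝ → Rn n → Rn n → Rn n → ℂ) (f₁ f₂ : Rn n → ℂ)
    (hm : 0 < m) (hlam : 4 < lam) (hα : 0 < α)
    (hμ : IsPowerBounded μ m Cμ) (hker : IsLPKernel2 m α A s) (ht₀ : 0 < t₀)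
    (hbd₁ : ∃ M, ∀ x, ‖f₁ x‖ ≤ M) (hbd₂ : ∃ M, ∀ x, ‖f₂ x‖ ≤ M)
    (hsupp₁ : HasCompactSupport f₁) (hsupp₂ : HasCompactSupport f₂) :
    ∃ C : ℝ≥0∞, C ≠ ⊤ ∧ ∀ x : Rn n,
      (∫⁻ t in Ioi t₀, gKer μ m lam (Theta2 μ s f₁ f₂) t x / ENNReal.ofReal (t ^ (m+1))) ≤
        C * ENNReal.ofReal ((t₀ + dist x (0:Rn n)) ^ (-m)) := by
  have hμ' : IsPowerBounded μ m (max Cμ 0) := by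
    intro x r hr
    exact (hμ x r hr).trans (ENNReal.ofReal_le_ofReal
      (mul_le_mul_of_nonneg_right (le_max_left _ _) (Real.rpow_nonneg hr.le m)))
  obtain ⟨cA, hcA, hcAb⟩ := lemA μ hm (le_max_right Cμ 0) hμ' (show m < m + α by linarith)
  obtain ⟨B, hB0, hB⟩ := thetaBound μ s f₁ f₂ hm hα hμ hker ht₀ hbd₁ hbd₂ hsupp₁ hsupp₂
  set c₂ : ℝ≥0∞ := ∫⁻ t in Ioi t₀, ENNReal.ofReal (t ^ (-(3*m)-1)) with hc₂def
  have hc₂ : c₂ ≠ ⊤ := by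
    have hint : IntegrableOn (fun t : ℝ => t ^ (-(3*m)-1)) (Ioi t₀) volume :=
      integrableOn_Ioi_rpow_of_lt (by linarith) ht₀
    have := hint.2
    rw [hasFiniteIntegral_iff_norm] at this
    refine ne_top_of_le_ne_top this.ne ?_
    apply lintegral_mono
    intro t
    exact ENNReal.ofReal_le_ofReal (le_abs_self _)
  refine ⟨ENNReal.ofReal (B^2 * 2^(m+α)) * cA * c₂, by
    exact ENNReal.mul_ne_top (ENNReal.mul_ne_top ENNReal.ofReal_ne_top hcA) hc₂, ?_⟩
  intro x
  set D := dist x (0:Rn n) with hDdef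
  have hD0 : 0 ≤ D := dist_nonneg
  have hmain : ∀ t ∈ Ioi t₀, gKer μ m lam (Theta2 μ s f₁ f₂) t x / ENNReal.ofReal (t^(m+1))
      ≤ (ENNReal.ofReal (B^2 * 2^(m+α)) * cA * ENNReal.ofReal ((t₀+D)^(-m)))
        * ENNReal.ofReal (t^(-(3*m)-1)) := by
    intro t htmem
    have htt : t₀ < t := htmem
    have ht0 : 0 < t := ht₀.trans htt
    -- pointwise bound on the integrand of gKer
    have hptw : ∀ y : Rn n,
        ENNReal.ofReal ((t / (t + dist x y)) ^ (m * lam)) * (‖Theta2 μ s f₁ f₂ t y‖₊ : ℝ≥0∞) ^ 2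
        ≤ ENNReal.ofReal (B^2 * 2^(m+α) * (t+D)^(-m) * t^(-(3*m)))
          * ENNReal.ofReal ((t / (t + dist (0:Rn n) y)) ^ (m+α)) := by
      intro y
      set dy := dist y (0:Rn n) with hdy
      have hdy0 : 0 ≤ dy := dist_nonneg
      set Qy := (t + dy) ^ (-(m+α)) with hQy
      have hQy0 : 0 ≤ Qy := Real.rpow_nonneg (by linarith) _
      have hnorm : ‖Theta2 μ s f₁ f₂ t y‖ ≤ B * t^(α-m) * Qy := by
        have h1 := hB t y htt.le
        have hQle : Qy ≤ t ^ (-(m+α)) :=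
          rpow_neg_base_anti ht0 (by linarith) (by linarith)
        calc ‖Theta2 μ s f₁ f₂ t y‖ ≤ B * t^(2*α) * (Qy * Qy) := h1
          _ = (B * t^(2*α) * Qy) * Qy := by ring
          _ ≤ (B * t^(2*α) * t^(-(m+α))) * Qy := by
              apply mul_le_mul_of_nonneg_right ?_ hQy0
              exact mul_le_mul_of_nonneg_left hQle
                (mul_nonneg hB0 (Real.rpow_nonneg ht0.le _))
          _ = B * t^(α-m) * Qy := by
              rw [show α - m = 2*α + (-(m+α)) by ring, Real.rpow_add ht0]; ring
      have hsq : (‖Theta2 μ s f₁ f₂ t y‖₊ : ℝ≥0∞) ^ 2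
          ≤ ENNReal.ofReal ((B * t^(α-m) * Qy)^2) := by
        rw [ENNReal.ofReal_pow (by positivity)]
        apply pow_le_pow_left' ?_ 2
        rw [← ENNReal.ofReal_coe_nnreal, coe_nnnorm]
        exact ENNReal.ofReal_le_ofReal hnorm
      have hw0 : 0 ≤ (t / (t + dist x y)) ^ (m * lam) :=
        Real.rpow_nonneg (by positivity) _
      calc ENNReal.ofReal ((t / (t + dist x y)) ^ (m * lam))
            * (‖Theta2 μ s f₁ f₂ t y‖₊ : ℝ≥0∞) ^ 2
          ≤ ENNReal.ofReal ((t / (t + dist x y)) ^ (m * lam))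
            * ENNReal.ofReal ((B * t^(α-m) * Qy)^2) := mul_le_mul_right hsq _
        _ = ENNReal.ofReal ((t / (t + dist x y)) ^ (m * lam) * (B * t^(α-m) * Qy)^2) :=
            (ENNReal.ofReal_mul hw0).symm
        _ ≤ ENNReal.ofReal (B^2 * 2^(m+α) * (t+D)^(-m) * t^(-(3*m))
            * (t / (t + dist (0:Rn n) y)) ^ (m+α)) := by
            apply ENNReal.ofReal_le_ofReal
            have htri : D ≤ dist x y + dy := by
              rw [hDdef, hdy]
              exact dist_triangle x y 0
            have hWS := weight_split (m := m) (lam := lam) (α := α) (t := t)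
              hm hα (by linarith) ht0 dist_nonneg hdy0 hD0 htri
            have hfact : (t / (t + dist x y)) ^ (m * lam) * (B * t^(α-m) * Qy)^2
                = (B^2 * (t^(α-m))^2) * (((t / (t + dist x y)) ^ (m * lam) * Qy) * Qy) := by
              ring
            rw [hfact]
            have step1 : (B^2 * (t^(α-m))^2) * (((t / (t + dist x y)) ^ (m * lam) * Qy) * Qy)
                ≤ (B^2 * (t^(α-m))^2) * ((2 ^ (m + α) * (t + D) ^ (-m) * t ^ (-α)) * Qy) := by
              apply mul_le_mul_of_nonneg_left ?_ (by positivity)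
              exact mul_le_mul_of_nonneg_right hWS hQy0
            refine step1.trans (le_of_eq ?_)
            have eQ : Qy = t^(-(m+α)) * (t / (t + dist (0:Rn n) y)) ^ (m+α) := by
              rw [hQy, div_rpow_neg_eq ht0 dist_nonneg, dist_comm (0:Rn n) y, ← hdy,
                ← mul_assoc, ← Real.rpow_add ht0, neg_add_cancel, Real.rpow_zero, one_mul]
            rw [eQ]
            have e2 : (t^(α-m))^2 = t^(2*(α-m)) := by
              rw [← Real.rpow_natCast (t^(α-m)) 2, ← Real.rpow_mul ht0.le]
              norm_num; ring_nf
            rw [e2]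
            have e3 : t^(2*(α-m)) * t^(-α) * t^(-(m+α)) = t^(-(3*m)) := by
              rw [← Real.rpow_add ht0, ← Real.rpow_add ht0]; ring_nf
            calc B ^ 2 * t ^ (2*(α - m)) *
                  (2 ^ (m + α) * (t + D) ^ (-m) * t ^ (-α) *
                    (t ^ (-(m + α)) * (t / (t + dist (0:Rn n) y)) ^ (m + α)))
                = (B^2 * 2^(m+α) * (t+D)^(-m)) * (t^(2*(α-m)) * t^(-α) * t^(-(m+α)))
                  * (t / (t + dist (0:Rn n) y)) ^ (m+α) := by ring
              _ = B^2 * 2^(m+α) * (t+D)^(-m) * t^(-(3*m))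
                  * (t / (t + dist (0:Rn n) y)) ^ (m+α) := by rw [e3]
        _ = ENNReal.ofReal (B^2 * 2^(m+α) * (t+D)^(-m) * t^(-(3*m)))
            * ENNReal.ofReal ((t / (t + dist (0:Rn n) y)) ^ (m+α)) := by
            rw [ENNReal.ofReal_mul (by positivity)]
    -- integrate in y
    have hgker : gKer μ m lam (Theta2 μ s f₁ f₂) t x
        ≤ ENNReal.ofReal (B^2 * 2^(m+α) * (t+D)^(-m) * t^(-(3*m)))
          * (cA * ENNReal.ofReal (t^m)) := by
      calc gKer μ m lam (Theta2 μ s f₁ f₂) t x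
          ≤ ∫⁻ y, ENNReal.ofReal (B^2 * 2^(m+α) * (t+D)^(-m) * t^(-(3*m)))
            * ENNReal.ofReal ((t / (t + dist (0:Rn n) y)) ^ (m+α)) ∂μ :=
            lintegral_mono hptw
        _ = ENNReal.ofReal (B^2 * 2^(m+α) * (t+D)^(-m) * t^(-(3*m)))
            * ∫⁻ y, ENNReal.ofReal ((t / (t + dist (0:Rn n) y)) ^ (m+α)) ∂μ :=
            lintegral_const_mul' _ _ ENNReal.ofReal_ne_top
        _ ≤ _ := mul_le_mul_right (hcAb 0 t ht0) _
    -- divide by t^{m+1} and clean up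
    calc gKer μ m lam (Theta2 μ s f₁ f₂) t x / ENNReal.ofReal (t^(m+1))
        ≤ (ENNReal.ofReal (B^2 * 2^(m+α) * (t+D)^(-m) * t^(-(3*m)))
          * (cA * ENNReal.ofReal (t^m))) / ENNReal.ofReal (t^(m+1)) :=
          ENNReal.div_le_div_right hgker _
      _ = (ENNReal.ofReal (B^2 * 2^(m+α)) * cA * ENNReal.ofReal ((t+D)^(-m)))
          * ENNReal.ofReal (t^(-(3*m)) * t^m / t^(m+1)) := by
          have hTD : (0:ℝ) ≤ (t+D)^(-m) := Real.rpow_nonneg (by linarith) _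
          have ht3 : (0:ℝ) ≤ t^(-(3*m)) := Real.rpow_nonneg ht0.le _
          have hofa : ENNReal.ofReal (B^2 * 2^(m+α) * (t+D)^(-m) * t^(-(3*m)))
              = ENNReal.ofReal (B^2 * 2^(m+α)) * ENNReal.ofReal ((t+D)^(-m))
                * ENNReal.ofReal (t^(-(3*m))) := by
            rw [← ENNReal.ofReal_mul (show (0:ℝ) ≤ B^2 * 2^(m+α) by positivity),
              ← ENNReal.ofReal_mul (mul_nonneg (by positivity) hTD)]
          have hofb : ENNReal.ofReal (t^(-(3*m)) * t^m / t^(m+1))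
              = ENNReal.ofReal (t^(-(3*m))) * ENNReal.ofReal (t^m)
                / ENNReal.ofReal (t^(m+1)) := by
            rw [ENNReal.ofReal_div_of_pos (Real.rpow_pos_of_pos ht0 _),
              ENNReal.ofReal_mul ht3]
          rw [hofa, hofb]
          simp only [div_eq_mul_inv]
          ring
      _ ≤ (ENNReal.ofReal (B^2 * 2^(m+α)) * cA * ENNReal.ofReal ((t₀+D)^(-m)))
          * ENNReal.ofReal (t^(-(3*m)-1)) := by
          refine mul_le_mul' (mul_le_mul_right (ENNReal.ofReal_le_ofReal
            (rpow_neg_base_anti (by linarith) (by linarith) hm.le)) _)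
            (ENNReal.ofReal_le_ofReal (le_of_eq ?_))
          rw [← Real.rpow_add ht0, ← Real.rpow_sub ht0]
          ring_nf
  calc (∫⁻ t in Ioi t₀, gKer μ m lam (Theta2 μ s f₁ f₂) t x / ENNReal.ofReal (t ^ (m+1)))
      ≤ ∫⁻ t in Ioi t₀, (ENNReal.ofReal (B^2 * 2^(m+α)) * cA * ENNReal.ofReal ((t₀+D)^(-m)))
          * ENNReal.ofReal (t^(-(3*m)-1)) :=
        setLIntegral_mono' measurableSet_Ioi hmain
    _ = (ENNReal.ofReal (B^2 * 2^(m+α)) * cA * ENNReal.ofReal ((t₀+D)^(-m))) * c₂ :=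
        lintegral_const_mul' _ _ (by
          exact ENNReal.mul_ne_top (ENNReal.mul_ne_top ENNReal.ofReal_ne_top hcA)
            ENNReal.ofReal_ne_top)
    _ = ENNReal.ofReal (B^2 * 2^(m+α)) * cA * c₂ * ENNReal.ofReal ((t₀+D)^(-m)) := by ring

end Lemma32Proof

open Filter in
/-- (Lemma 3.2: for bounded compactly supported `f₁,f₂` and any `t₀ > 0`,
the super-level sets `Ω_ξ` of the truncated `g^*_{λ,μ,t₀}(f₁,f₂)` satisfy `Ω_ξ ≠ ℝⁿ`,
`μ(Ω_ξ) < ∞` and `Ω_ξ` is open; indeed the truncated `g`-function is continuous and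
vanishes at infinity). -/
theorem truncated_superlevel_sets (n : ℕ) (m lam α Cμ A t₀ : ℝ)
    (μ : Measure (Rn n)) (s : ℝ → Rn n → Rn n → Rn n → ℂ)
    (f₁ f₂ : Rn n → ℂ)
    (hn : 1 ≤ n) (hm : 0 < m) (hlam : 4 < lam) (hα : 0 < α) (hα' : α ≤ m * (lam - 4))
    (hμ : IsPowerBounded μ m Cμ) (hker : IsLPKernel2 m α A s) (ht₀ : 0 < t₀)
    (hmeas₁ : Measurable f₁) (hmeas₂ : Measurable f₂)
    (hbd₁ : ∃ M, ∀ x, ‖f₁ x‖ ≤ M) (hbd₂ : ∃ M, ∀ x, ‖f₂ x‖ ≤ M)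
    (hsupp₁ : HasCompactSupport f₁) (hsupp₂ : HasCompactSupport f₂) :
    (∀ ξ : ℝ, 0 < ξ →
      {x | ENNReal.ofReal ξ < gstar2T μ m lam s f₁ f₂ t₀ x} ≠ Set.univ ∧
      μ {x | ENNReal.ofReal ξ < gstar2T μ m lam s f₁ f₂ t₀ x} < ⊤ ∧
      IsOpen {x | ENNReal.ofReal ξ < gstar2T μ m lam s f₁ f₂ t₀ x}) ∧
    Continuous (fun x => gstar2T μ m lam s f₁ f₂ t₀ x) ∧
    Filter.Tendsto (fun x => gstar2T μ m lam s f₁ f₂ t₀ x)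
      (Filter.cocompact (Rn n)) (nhds 0) := by
  set H : Rn n → ℝ≥0∞ := fun x =>
    ∫⁻ t in Ioi t₀, gKer μ m lam (Theta2 μ s f₁ f₂) t x / ENNReal.ofReal (t ^ (m+1))
    with hHdef
  have hGH : ∀ x, gstar2T μ m lam s f₁ f₂ t₀ x = H x ^ ((1:ℝ)/2) := fun _ => rfl
  obtain ⟨C, hC, hCb⟩ := masterBound μ s f₁ f₂ hm hlam hα hμ hker ht₀ hbd₁ hbd₂ hsupp₁ hsupp₂
  have hHfin : ∀ x, H x ≠ ⊤ := fun x =>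
    ne_top_of_le_ne_top (ENNReal.mul_ne_top hC ENNReal.ofReal_ne_top) (hCb x)
  have hml : 0 ≤ m * lam := mul_nonneg hm.le (by linarith)
  -- comparison of gKer at two poles
  have hgker_comp : ∀ (x x' : Rn n) (t : ℝ), t₀ < t →
      gKer μ m lam (Theta2 μ s f₁ f₂) t x ≤
        ENNReal.ofReal ((1 + dist x x' / t₀) ^ (m * lam)) *
          gKer μ m lam (Theta2 μ s f₁ f₂) t x' := by
    intro x x' t htt
    have ht0 : 0 < t := ht₀.trans htt
    rw [gKer, gKer, ← lintegral_const_mul' _ _ ENNReal.ofReal_ne_top]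
    apply lintegral_mono
    intro y
    dsimp only
    rw [← mul_assoc]
    apply mul_le_mul_left
    rw [← ENNReal.ofReal_mul (Real.rpow_nonneg (by positivity) _)]
    apply ENNReal.ofReal_le_ofReal
    rw [div_rpow_neg_eq ht0 dist_nonneg, div_rpow_neg_eq ht0 dist_nonneg]
    have hk := key_inv (p := m*lam) ht₀ htt.le (dist_nonneg (x := x) (y := x')) hml
      (dist_nonneg (x := x) (y := y)) (dist_nonneg (x := x') (y := y))
      (by calc dist x' y ≤ dist x' x + dist x y := dist_triangle _ _ _
            _ = dist x y + dist x x' := by rw [dist_comm x' x]; ring)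
    calc t^(m*lam) * (t + dist x y)^(-(m*lam))
        ≤ t^(m*lam) * ((1 + dist x x' / t₀)^(m*lam) * (t + dist x' y)^(-(m*lam))) :=
          mul_le_mul_of_nonneg_left hk (Real.rpow_nonneg ht0.le _)
      _ = (1 + dist x x' / t₀)^(m*lam) * (t^(m*lam) * (t + dist x' y)^(-(m*lam))) := by ring
  have hcomp : ∀ x x' : Rn n,
      H x ≤ ENNReal.ofReal ((1 + dist x x' / t₀) ^ (m * lam)) * H x' := by
    intro x x'
    calc H x ≤ ∫⁻ t in Ioi t₀, ENNReal.ofReal ((1 + dist x x' / t₀) ^ (m * lam)) *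
          (gKer μ m lam (Theta2 μ s f₁ f₂) t x' / ENNReal.ofReal (t^(m+1))) := by
          apply setLIntegral_mono' measurableSet_Ioi
          intro t htmem
          rw [← mul_div_assoc]
          exact ENNReal.div_le_div_right (hgker_comp x x' t htmem) _
      _ = ENNReal.ofReal ((1 + dist x x' / t₀) ^ (m * lam)) * H x' :=
          lintegral_const_mul' _ _ ENNReal.ofReal_ne_top
  -- continuity of H
  have hHcont : Continuous H := by
    rw [continuous_iff_continuousAt]
    intro x₀
    have hkreal : ContinuousAt (fun x : Rn n => (1 + dist x x₀ / t₀) ^ (m * lam)) x₀ := by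
      apply ContinuousAt.rpow_const
      · exact (continuousAt_const.add (((continuous_id.dist continuous_const).div_const
          t₀).continuousAt))
      · exact Or.inr hml
    have hk : Tendsto (fun x : Rn n => ENNReal.ofReal ((1 + dist x x₀ / t₀) ^ (m * lam)))
        (nhds x₀) (nhds 1) := by
      have h2 := ENNReal.tendsto_ofReal hkreal.tendsto
      simpa [dist_self, Real.one_rpow] using h2
    have hkne0 : ∀ x : Rn n, ENNReal.ofReal ((1 + dist x x₀ / t₀) ^ (m * lam)) ≠ 0 :=
      fun x => (ENNReal.ofReal_pos.mpr (Real.rpow_pos_of_pos (by positivity) _)).ne'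
    have hlo : ∀ x : Rn n,
        H x₀ / ENNReal.ofReal ((1 + dist x x₀ / t₀) ^ (m * lam)) ≤ H x := by
      intro x
      rw [ENNReal.div_le_iff_le_mul (Or.inl (hkne0 x)) (Or.inl ENNReal.ofReal_ne_top)]
      calc H x₀ ≤ ENNReal.ofReal ((1 + dist x₀ x / t₀) ^ (m * lam)) * H x := hcomp x₀ x
        _ = H x * ENNReal.ofReal ((1 + dist x x₀ / t₀) ^ (m * lam)) := by
            rw [dist_comm x₀ x, mul_comm]
    have hup : ∀ x : Rn n,
        H x ≤ ENNReal.ofReal ((1 + dist x x₀ / t₀) ^ (m * lam)) * H x₀ := fun x => hcomp x x₀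
    have hlolim : Tendsto
        (fun x => H x₀ / ENNReal.ofReal ((1 + dist x x₀ / t₀) ^ (m * lam)))
        (nhds x₀) (nhds (H x₀)) := by
      have hinv : Tendsto
          (fun x => (ENNReal.ofReal ((1 + dist x x₀ / t₀) ^ (m * lam)))⁻¹)
          (nhds x₀) (nhds 1) := by
        simpa using ENNReal.tendsto_inv_iff.mpr hk
      have := ENNReal.Tendsto.const_mul (a := H x₀) hinv (Or.inl one_ne_zero)
      simpa [div_eq_mul_inv] using this
    have huplim : Tendsto
        (fun x => ENNReal.ofReal ((1 + dist x x₀ / t₀) ^ (m * lam)) * H x₀)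
        (nhds x₀) (nhds (H x₀)) := by
      have := ENNReal.Tendsto.mul_const (b := H x₀) hk (Or.inl one_ne_zero)
      simpa using this
    exact tendsto_of_tendsto_of_tendsto_of_le_of_le hlolim huplim hlo hup
  have hGcont : Continuous (fun x => gstar2T μ m lam s f₁ f₂ t₀ x) := by
    simp only [hGH]
    exact ENNReal.continuous_rpow_const.comp hHcont
  -- vanishing at infinity
  have hGzero : Tendsto (fun x => gstar2T μ m lam s f₁ f₂ t₀ x)
      (Filter.cocompact (Rn n)) (nhds 0) := by
    have hle : ∀ x, gstar2T μ m lam s f₁ f₂ t₀ x ≤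
        (C * ENNReal.ofReal ((t₀ + dist x (0:Rn n)) ^ (-m))) ^ ((1:ℝ)/2) := fun x => by
      rw [hGH]; exact ENNReal.rpow_le_rpow (hCb x) (by norm_num)
    have h0 : Tendsto (fun x : Rn n =>
        (C * ENNReal.ofReal ((t₀ + dist x (0:Rn n)) ^ (-m))) ^ ((1:ℝ)/2))
        (Filter.cocompact (Rn n)) (nhds 0) := by
      have h1 : Tendsto (fun r : ℝ => (t₀ + r) ^ (-m)) atTop (nhds 0) :=
        (tendsto_rpow_neg_atTop hm).comp (tendsto_atTop_add_const_left atTop t₀ tendsto_id)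
      have h2 : Tendsto (fun x : Rn n => (t₀ + dist x (0:Rn n)) ^ (-m))
          (Filter.cocompact (Rn n)) (nhds 0) :=
        h1.comp (tendsto_dist_right_cocompact_atTop (0 : Rn n))
      have h3 := ENNReal.tendsto_ofReal h2
      have h4 := ENNReal.Tendsto.const_mul (a := C) h3 (Or.inr hC)
      simp only [ENNReal.ofReal_zero, mul_zero] at h4
      have h5 := (ENNReal.continuous_rpow_const (y := (1:ℝ)/2)).tendsto 0 |>.comp h4
      simpa [Function.comp_def, ENNReal.zero_rpow_of_pos (show (0:ℝ) < 1/2 by norm_num)] using h5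
    exact tendsto_of_tendsto_of_tendsto_of_le_of_le tendsto_const_nhds h0
      (fun x => zero_le) hle
  refine ⟨?_, hGcont, hGzero⟩
  intro ξ hξ
  have hξ' : (0:ℝ≥0∞) < ENNReal.ofReal ξ := ENNReal.ofReal_pos.mpr hξ
  have hev : ∀ᶠ x in Filter.cocompact (Rn n),
      gstar2T μ m lam s f₁ f₂ t₀ x < ENNReal.ofReal ξ :=
    hGzero.eventually_lt_const hξ'
  refine ⟨?_, ?_, isOpen_lt continuous_const hGcont⟩
  · haveI : Nonempty (Fin n) := ⟨⟨0, hn⟩⟩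
    haveI : NoncompactSpace (Rn n) := by infer_instance
    obtain ⟨x, hx⟩ := hev.exists
    exact (Set.ne_univ_iff_exists_notMem _).mpr ⟨x, by
      simp only [mem_setOf_eq]; exact not_lt.mpr hx.le⟩
  · obtain ⟨K, hKc, hKsub⟩ := Filter.mem_cocompact.mp hev
    have hsub : {x | ENNReal.ofReal ξ < gstar2T μ m lam s f₁ f₂ t₀ x} ⊆ K := by
      intro x hx
      by_contra hxK
      have h2 := hKsub hxK
      simp only [mem_setOf_eq] at h2 hx
      exact lt_asymm hx h2
    obtain ⟨r, hr⟩ := hKc.isBounded.subset_closedBall (0 : Rn n)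
    have hballfin : μ (ball (0:Rn n) (max r 0 + 1)) < ⊤ :=
      lt_of_le_of_lt (hμ 0 _ (by positivity)) ENNReal.ofReal_lt_top
    refine lt_of_le_of_lt (measure_mono (hsub.trans (hr.trans ?_))) hballfin
    exact closedBall_subset_ball ((le_max_left r 0).trans_lt (lt_add_one _))
end
end

section
/- (Carleson packing estimate, Lemma 6.3.) Let μ be a Borel measure on ℝⁿ that is finite on bounded sets, let 𝒟 be the standard dyadic lattice, let 1 < q < ∞, s ∈ ℤ and A > 0. Let (a_Q)_{Q∈𝒟} be nonnegative Borel functions such that for every F ∈ 𝒟 with ℓ(F) ≤ 2^s one has ∑_{Q∈𝒟, Q⊆F} a_Q(x)² ≤ A · 1_F(x) for μ-a.e. x. Then there is a constant C depending only on q and n such that for every φ ∈ L^q(μ): ‖(∑_{Q∈𝒟, ℓ(Q)≤2^s} |⟨φ⟩_Q|² a_Q²)^{1/2}‖_{L^q(μ)} ≤ C √A ‖φ‖_{L^q(μ)}. -/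
open MeasureTheory Metric Set
open scoped ENNReal NNReal BigOperators

noncomputable section

variable {n : ℕ}

namespace CP

variable {n : ℕ}

instance : Countable (DyadicCube n) := by
  have h : Function.Injective (fun Q : DyadicCube n => (Q.k, Q.pos)) := by
    rintro ⟨k, p⟩ ⟨k', p'⟩ h
    simp only [Prod.mk.injEq] at h
    simp [h.1, h.2]
  exact h.countable

lemma side_pos (Q : DyadicCube n) : 0 < Q.side := zpow_pos two_pos _

lemma mem_carrier_iff {Q : DyadicCube n} {x : Rn n} :
    x ∈ Q.carrier ↔ ∀ i, ⌊x i / Q.side⌋ = Q.pos i := by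
  have hs := side_pos Q
  unfold DyadicCube.carrier
  simp only [Set.mem_setOf_eq]
  refine forall_congr' fun i => ?_
  rw [Int.floor_eq_iff]
  constructor
  · rintro ⟨h1, h2⟩
    exact ⟨(le_div_iff₀ hs).2 (by linarith [h1]),
      (div_lt_iff₀ hs).2 (by push_cast; linarith [h2])⟩
  · rintro ⟨h1, h2⟩
    constructor
    · calc (Q.pos i : ℝ) * Q.side ≤ (x i / Q.side) * Q.side := by
            exact mul_le_mul_of_nonneg_right h1 hs.le
        _ = x i := by field_simp
    · calc x i = (x i / Q.side) * Q.side := by field_simp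
        _ < ((Q.pos i : ℝ) + 1) * Q.side := by
            exact mul_lt_mul_of_pos_right (by push_cast at h2 ⊢; linarith) hs

lemma mem_dyadicAt (k : ℤ) (x : Rn n) : x ∈ (dyadicAt k x).carrier := by
  rw [mem_carrier_iff]
  intro i
  rfl

lemma eq_dyadicAt {Q : DyadicCube n} {x : Rn n} (h : x ∈ Q.carrier) :
    Q = dyadicAt Q.k x := by
  rw [mem_carrier_iff] at h
  obtain ⟨k, p⟩ := Q
  unfold dyadicAt
  simp only [DyadicCube.mk.injEq, true_and]
  funext i
  exact (h i).symm

lemma dyadic_unique {Q R : DyadicCube n} {x : Rn n} (hk : Q.k = R.k)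
    (hQ : x ∈ Q.carrier) (hR : x ∈ R.carrier) : Q = R := by
  rw [eq_dyadicAt hQ, eq_dyadicAt hR, hk]

lemma side_le_side {Q R : DyadicCube n} (hk : Q.k ≤ R.k) : Q.side ≤ R.side := by
  exact zpow_le_zpow_right₀ one_le_two hk

lemma carrier_subset {Q R : DyadicCube n} (hk : Q.k ≤ R.k)
    (h : (Q.carrier ∩ R.carrier).Nonempty) : Q.carrier ⊆ R.carrier := by
  obtain ⟨x, hxQ, hxR⟩ := h
  intro y hy i
  have hs := side_pos Q
  have hs' := side_pos R
  -- m with (m:ℝ) * Q.side = R.side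
  set m : ℤ := 2 ^ (R.k - Q.k).toNat with hm
  have hmR : (m : ℝ) * Q.side = R.side := by
    rw [hm]
    push_cast
    rw [← zpow_natCast (2:ℝ) (R.k - Q.k).toNat, Int.toNat_of_nonneg (by omega)]
    unfold DyadicCube.side
    rw [← zpow_add₀ (by norm_num : (2:ℝ) ≠ 0)]
    ring_nf
  set p : ℤ := Q.pos i
  set p' : ℤ := R.pos i
  have hxQ1 := (hxQ i).1
  have hxQ2 := (hxQ i).2
  have hxR1 := (hxR i).1
  have hxR2 := (hxR i).2
  have h1 : (p' * m : ℤ) ≤ p := by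
    have : ((p' * m : ℤ) : ℝ) * Q.side < ((p + 1 : ℤ) : ℝ) * Q.side := by
      push_cast
      calc (p' : ℝ) * m * Q.side = p' * R.side := by rw [mul_assoc, hmR]
        _ ≤ x i := hxR1
        _ < (p + 1) * Q.side := hxQ2
    have := lt_of_mul_lt_mul_right this hs.le
    exact_mod_cast Int.lt_add_one_iff.mp (by exact_mod_cast this)
  have h2 : (p + 1 : ℤ) ≤ (p' + 1) * m := by
    have : ((p : ℤ) : ℝ) * Q.side < (((p' + 1) * m : ℤ) : ℝ) * Q.side := by
      push_cast
      calc (p : ℝ) * Q.side ≤ x i := hxQ1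
        _ < (p' + 1) * R.side := hxR2
        _ = (p' + 1) * m * Q.side := by rw [mul_assoc, hmR]
    have := lt_of_mul_lt_mul_right this hs.le
    exact Int.lt_iff_add_one_le.mp (by exact_mod_cast this)
  constructor
  · calc (p' : ℝ) * R.side = ((p' * m : ℤ) : ℝ) * Q.side := by push_cast; rw [mul_assoc, hmR]
      _ ≤ (p : ℝ) * Q.side := by
          exact mul_le_mul_of_nonneg_right (by exact_mod_cast h1) hs.le
      _ ≤ y i := (hy i).1
  · calc y i < ((p + 1 : ℤ) : ℝ) * Q.side := by push_cast; exact (hy i).2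
      _ ≤ (((p' + 1) * m : ℤ) : ℝ) * Q.side := by
          exact mul_le_mul_of_nonneg_right (by exact_mod_cast h2) hs.le
      _ = ((p' : ℝ) + 1) * R.side := by push_cast; rw [mul_assoc, hmR]

lemma measurableSet_carrier (Q : DyadicCube n) : MeasurableSet Q.carrier := by
  have h : Q.carrier = ⋂ i, (fun x : Rn n => x i) ⁻¹'
      (Set.Ico ((Q.pos i : ℝ) * Q.side) (((Q.pos i : ℝ) + 1) * Q.side)) := by
    ext x
    simp [DyadicCube.carrier, Set.mem_iInter, Set.mem_Ico]
  rw [h]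
  exact MeasurableSet.iInter fun i => (by fun_prop : Measurable fun x : Rn n => x i) measurableSet_Ico

lemma center_mem (Q : DyadicCube n) : Q.center ∈ Q.carrier := by
  intro i
  have hs := side_pos Q
  unfold DyadicCube.center
  simp only [WithLp.ofLp_toLp]
  constructor
  · nlinarith
  · nlinarith

end CP
namespace CP

/-- The truncated dyadic maximal operator. -/
def Mdy (μ : Measure (Rn n)) (sgen : ℤ) (g : Rn n → ℝ≥0∞) (x : Rn n) : ℝ≥0∞ :=
  ⨆ (Q : DyadicCube n) (_ : Q.k ≤ sgen) (_ : x ∈ Q.carrier),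
    (∫⁻ z in Q.carrier, g z ∂μ) / μ Q.carrier

lemma rat_le_Mdy {μ : Measure (Rn n)} {sgen : ℤ} {g : Rn n → ℝ≥0∞} {Q : DyadicCube n}
    {x : Rn n} (hk : Q.k ≤ sgen) (hx : x ∈ Q.carrier) :
    (∫⁻ z in Q.carrier, g z ∂μ) / μ Q.carrier ≤ Mdy μ sgen g x := by
  refine le_iSup_of_le Q ?_
  rw [iSup_pos hk, iSup_pos hx]

lemma measurable_Mdy (μ : Measure (Rn n)) (sgen : ℤ) (g : Rn n → ℝ≥0∞) :
    Measurable (Mdy μ sgen g) := by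
  apply Measurable.iSup
  intro Q
  by_cases hk : Q.k ≤ sgen
  · simp only [iSup_pos hk]
    have : (fun x => ⨆ (_ : x ∈ Q.carrier), (∫⁻ z in Q.carrier, g z ∂μ) / μ Q.carrier)
        = Set.indicator Q.carrier (fun _ => (∫⁻ z in Q.carrier, g z ∂μ) / μ Q.carrier) := by
      funext x
      by_cases hx : x ∈ Q.carrier
      · simp [iSup_pos hx, Set.indicator_of_mem hx]
      · simp [iSup_neg hx, Set.indicator_of_notMem hx]
    rw [this]
    exact measurable_const.indicator (measurableSet_carrier Q)
  · simp only [iSup_neg hk]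
    exact measurable_const

lemma Mdy_le_add {μ : Measure (Rn n)} {sgen : ℤ} {g₁ g₂ : Rn n → ℝ≥0∞}
    (hg₁ : Measurable g₁) :
    ∀ x, Mdy μ sgen (fun y => g₁ y + g₂ y) x ≤ Mdy μ sgen g₁ x + Mdy μ sgen g₂ x := by
  intro x
  apply iSup_le; intro Q; apply iSup_le; intro hk; apply iSup_le; intro hx
  rw [lintegral_add_left hg₁, ENNReal.add_div]
  exact add_le_add (rat_le_Mdy hk hx) (rat_le_Mdy hk hx)

lemma Mdy_le_const {μ : Measure (Rn n)} {sgen : ℤ} {g : Rn n → ℝ≥0∞} {c : ℝ≥0∞}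
    (hgc : ∀ y, g y ≤ c) : ∀ x, Mdy μ sgen g x ≤ c := by
  intro x
  apply iSup_le; intro Q; apply iSup_le; intro hk; apply iSup_le; intro hx
  apply ENNReal.div_le_of_le_mul
  calc ∫⁻ z in Q.carrier, g z ∂μ ≤ ∫⁻ _ in Q.carrier, c ∂μ :=
        lintegral_mono fun z => hgc z
    _ = c * μ Q.carrier := by rw [setLIntegral_const]

/-- Weak type (1,1) bound for the truncated dyadic maximal operator. -/
lemma weak (μ : Measure (Rn n)) (sgen : ℤ) (g : Rn n → ℝ≥0∞)
    {t : ℝ≥0∞} (ht0 : t ≠ 0) (ht : t ≠ ∞) :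
    μ {x | t < Mdy μ sgen g x} ≤ t⁻¹ * ∫⁻ x, g x ∂μ := by
  set rat : DyadicCube n → ℝ≥0∞ := fun Q => (∫⁻ z in Q.carrier, g z ∂μ) / μ Q.carrier with hrat
  set P : DyadicCube n → Prop := fun Q => Q.k ≤ sgen ∧ t < rat Q ∧
    ∀ R : DyadicCube n, R.k ≤ sgen → Q.k < R.k → Q.center ∈ R.carrier → rat R ≤ t with hP
  -- each cube satisfying `t < rat Q` has mass control
  have hmass : ∀ Q : DyadicCube n, t < rat Q → μ Q.carrier ≤ t⁻¹ * ∫⁻ z in Q.carrier, g z ∂μ := by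
    intro Q hQ
    rcases eq_or_ne (μ Q.carrier) 0 with h0 | h0
    · simp [h0]
    rcases eq_or_ne (μ Q.carrier) ∞ with hT | hT
    · rw [hrat] at hQ
      simp only [hT, ENNReal.div_top] at hQ
      exact absurd hQ (by simp)
    have hlt : t * μ Q.carrier < ∫⁻ z in Q.carrier, g z ∂μ :=
      (ENNReal.lt_div_iff_mul_lt (Or.inl h0) (Or.inl hT)).1 hQ
    calc μ Q.carrier = t⁻¹ * (t * μ Q.carrier) := by
          rw [← mul_assoc, ENNReal.inv_mul_cancel ht0 ht, one_mul]
      _ ≤ t⁻¹ * ∫⁻ z in Q.carrier, g z ∂μ := mul_le_mul_right hlt.le _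
  -- cover
  have hcover : {x | t < Mdy μ sgen g x} ⊆ ⋃ Q ∈ {Q | P Q}, (Q : DyadicCube n).carrier := by
    intro x hx
    simp only [Set.mem_setOf_eq, Mdy, lt_iSup_iff] at hx
    obtain ⟨Q₀, hk₀, hx₀, hr₀⟩ := hx
    have hKne : ∃ k : ℤ, k ≤ sgen ∧ t < rat (dyadicAt k x) := by
      refine ⟨Q₀.k, hk₀, ?_⟩
      rw [← eq_dyadicAt hx₀]
      exact hr₀
    obtain ⟨k, ⟨hk1, hk2⟩, hkmax⟩ := Int.exists_greatest_of_bdd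
      (P := fun k => k ≤ sgen ∧ t < rat (dyadicAt k x)) ⟨sgen, fun z hz => hz.1⟩ hKne
    refine Set.mem_biUnion (show P (dyadicAt k x) from ?_) (mem_dyadicAt k x)
    refine ⟨hk1, hk2, ?_⟩
    intro R hR hkR hcR
    -- R contains x
    have hsub : (dyadicAt k x).carrier ⊆ R.carrier := by
      apply carrier_subset (le_of_lt hkR)
      exact ⟨(dyadicAt k x).center, center_mem _, hcR⟩
    have hxR : x ∈ R.carrier := hsub (mem_dyadicAt k x)
    by_contra hcon
    push_neg at hcon
    have h2 := hkmax R.k ⟨hR, by rw [← eq_dyadicAt hxR]; exact hcon⟩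
    have hdk : (dyadicAt k x).k = k := rfl
    omega
  -- disjointness
  have hdisj : ∀ Q R : DyadicCube n, P Q → P R → Q ≠ R → Disjoint Q.carrier R.carrier := by
    have key : ∀ Q R : DyadicCube n, P Q → P R → Q ≠ R → Q.k ≤ R.k →
        Disjoint Q.carrier R.carrier := by
      intro Q R hQ hR hne hk
      rw [Set.disjoint_iff_inter_eq_empty]
      by_contra hcon
      have hne' : (Q.carrier ∩ R.carrier).Nonempty := Set.nonempty_iff_ne_empty.2 hcon
      rcases eq_or_lt_of_le hk with heq | hlt
      · obtain ⟨x, hx1, hx2⟩ := hne'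
        exact hne (dyadic_unique heq hx1 hx2)
      · have hsub := carrier_subset hk hne'
        have := hQ.2.2 R hR.1 hlt (hsub (center_mem Q))
        exact absurd hR.2.1 (not_lt.2 this)
    intro Q R hQ hR hne
    rcases le_total Q.k R.k with h | h
    · exact key Q R hQ hR hne h
    · exact (key R Q hR hQ (Ne.symm hne) h).symm
  calc μ {x | t < Mdy μ sgen g x} ≤ μ (⋃ Q ∈ {Q | P Q}, (Q : DyadicCube n).carrier) :=
        measure_mono hcover
    _ ≤ ∑' Q : {Q // P Q}, μ (Q : DyadicCube n).carrier :=
        measure_biUnion_le μ (Set.to_countable _) _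
    _ ≤ ∑' Q : {Q // P Q}, t⁻¹ * ∫⁻ z in (Q : DyadicCube n).carrier, g z ∂μ :=
        ENNReal.tsum_le_tsum fun Q => hmass Q Q.2.2.1
    _ = t⁻¹ * ∑' Q : {Q // P Q}, ∫⁻ z in (Q : DyadicCube n).carrier, g z ∂μ :=
        ENNReal.tsum_mul_left
    _ = t⁻¹ * ∫⁻ z in ⋃ Q : {Q // P Q}, (Q : DyadicCube n).carrier, g z ∂μ := by
        rw [lintegral_iUnion (fun Q => measurableSet_carrier _)
          (fun Q R hQR => hdisj _ _ Q.2 R.2 (fun h => hQR (Subtype.ext h)))]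
    _ ≤ t⁻¹ * ∫⁻ z, g z ∂μ := by
        exact mul_le_mul_right (lintegral_mono' Measure.restrict_le_self le_rfl) _

end CP
namespace CP

/-- `er s = 2^s` as an extended nonnegative real. -/
def er (s : ℝ) : ℝ≥0∞ := ENNReal.ofReal ((2:ℝ) ^ s)

lemma rpow_pos (s : ℝ) : (0:ℝ) < (2:ℝ) ^ s := Real.rpow_pos_of_pos two_pos s

lemma er_pos (s : ℝ) : 0 < er s := ENNReal.ofReal_pos.2 (rpow_pos s)

lemma er_ne_zero (s : ℝ) : er s ≠ 0 := (er_pos s).ne'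

lemma er_ne_top (s : ℝ) : er s ≠ ∞ := ENNReal.ofReal_ne_top

lemma er_add (s t : ℝ) : er (s + t) = er s * er t := by
  unfold er
  rw [Real.rpow_add two_pos, ENNReal.ofReal_mul (rpow_pos s).le]

lemma er_rpow (s t : ℝ) : er s ^ t = er (s * t) := by
  unfold er
  rw [ENNReal.ofReal_rpow_of_pos (rpow_pos s), ← Real.rpow_mul (by norm_num)]

lemma er_inv (s : ℝ) : (er s)⁻¹ = er (-s) := by
  unfold er
  rw [← ENNReal.ofReal_inv_of_pos (rpow_pos s), ← Real.rpow_neg (by norm_num)]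

lemma er_pow (s : ℝ) (k : ℕ) : er s ^ (k : ℕ) = er ((k : ℝ) * s) := by
  rw [← ENNReal.rpow_natCast, er_rpow, mul_comm]

lemma er_lt_er_iff {s t : ℝ} : er s < er t ↔ s < t := by
  unfold er
  rw [ENNReal.ofReal_lt_ofReal_iff (rpow_pos t), Real.rpow_lt_rpow_left_iff one_lt_two]

lemma er_le_er_iff {s t : ℝ} : er s ≤ er t ↔ s ≤ t := by
  rw [← not_lt, ← not_lt, er_lt_er_iff]

lemma er_zero : er 0 = 1 := by simp [er]

lemma er_lt_one {s : ℝ} (hs : s < 0) : er s < 1 := by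
  rw [← er_zero]; exact er_lt_er_iff.2 hs

lemma exists_lt_er (c : ℝ≥0∞) (hc : c ≠ ∞) {a : ℝ} (b : ℝ) (ha : 0 < a) :
    ∃ j : ℤ, c < er (a * j + b) := by
  set t := Real.logb 2 (c.toReal + 1) with hT
  refine ⟨⌈(t - b) / a⌉, ?_⟩
  have h1 : t ≤ a * (⌈(t - b) / a⌉ : ℝ) + b := by
    have := Int.le_ceil ((t - b) / a)
    have h2 := mul_le_mul_of_nonneg_left this ha.le
    rw [mul_div_cancel₀ _ ha.ne'] at h2
    linarith
  have h2 : c.toReal + 1 ≤ (2:ℝ) ^ (a * (⌈(t - b) / a⌉ : ℝ) + b) := by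
    have hpos : (0:ℝ) < c.toReal + 1 := by positivity
    calc c.toReal + 1 = (2:ℝ) ^ t := (Real.rpow_logb two_pos (by norm_num) hpos).symm
      _ ≤ _ := Real.rpow_le_rpow_left_iff one_lt_two |>.2 h1
  calc c = ENNReal.ofReal c.toReal := (ENNReal.ofReal_toReal hc).symm
    _ < ENNReal.ofReal (c.toReal + 1) := by
        rw [ENNReal.ofReal_lt_ofReal_iff (by positivity)]; linarith
    _ ≤ er (a * (⌈(t - b) / a⌉ : ℝ) + b) := ENNReal.ofReal_le_ofReal h2

lemma geom {s : ℝ} (hs : 0 < s) (j₀ : ℤ) :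
    ∑' j : ℤ, (if j ≤ j₀ then er ((j:ℝ) * s) else 0)
      = er ((j₀:ℝ) * s) * (1 - er (-s))⁻¹ := by
  set F : ℤ → ℝ≥0∞ := fun j => if j ≤ j₀ then er ((j:ℝ) * s) else 0 with hF
  have h1 : ∑' j : ℤ, F j = ∑' j : ℤ, F (j₀ - j) := by
    exact (Equiv.tsum_eq (Equiv.subLeft j₀) F).symm
  have h2 : ∑' j : ℤ, F (j₀ - j) = ∑' k : ℕ, F (j₀ - (k : ℤ)) := by
    refine (Function.Injective.tsum_eq (fun a b h => by exact_mod_cast h) ?_).symm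
    intro j hj
    simp only [Function.mem_support, hF] at hj
    have h0 : (0:ℤ) ≤ j := by
      by_contra hneg
      push_neg at hneg
      have : ¬ (j₀ - j ≤ j₀) := by omega
      simp [this] at hj
    exact ⟨j.toNat, by omega⟩
  have h3 : ∀ k : ℕ, F (j₀ - (k : ℤ)) = er ((j₀:ℝ) * s) * er (-s) ^ k := by
    intro k
    have : (j₀ - (k:ℤ) : ℤ) ≤ j₀ := by omega
    simp only [hF, if_pos this]
    rw [er_pow, ← er_add]
    congr 1
    push_cast
    ring
  rw [h1, h2]
  simp_rw [h3]
  rw [ENNReal.tsum_mul_left, ENNReal.tsum_geometric]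

end CP
namespace CP

lemma strong {q : ℝ} (hq : 1 < q) :
    ∃ K : ℝ≥0∞, K ≠ 0 ∧ K ≠ ∞ ∧ ∀ (n : ℕ) (μ : Measure (Rn n)) (sgen : ℤ)
      (g : Rn n → ℝ≥0∞), Measurable g →
      ∫⁻ x, Mdy μ sgen g x ^ q ∂μ ≤ K * ∫⁻ x, g x ^ q ∂μ := by
  have hq0 : (0:ℝ) < q := by linarith
  have hq1 : (0:ℝ) < q - 1 := by linarith
  set K' : ℝ≥0∞ := er (q - 1) * (1 - er (-(q - 1)))⁻¹ with hK'
  have hsub_pos : (0:ℝ≥0∞) < 1 - er (-(q-1)) :=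
    tsub_pos_of_lt (er_lt_one (by linarith))
  have hK'0 : K' ≠ 0 := by
    apply mul_ne_zero (er_ne_zero _)
    simp only [ne_eq, ENNReal.inv_eq_zero]
    exact (tsub_le_self.trans_lt (by norm_num : (1:ℝ≥0∞) < ∞)).ne
  have hK't : K' ≠ ∞ := by
    apply ENNReal.mul_ne_top (er_ne_top _)
    simp only [ne_eq, ENNReal.inv_eq_top]
    exact hsub_pos.ne'
  refine ⟨er (q + 1) * K', mul_ne_zero (er_ne_zero _) hK'0,
    ENNReal.mul_ne_top (er_ne_top _) hK't, ?_⟩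
  intro n μ sgen g hg
  set Mg := Mdy μ sgen g with hMg
  have hMgm : Measurable Mg := measurable_Mdy μ sgen g
  set S : ℤ → Set (Rn n) := fun j => {x | er (j:ℝ) < Mg x} with hS
  have hSm : ∀ j : ℤ, MeasurableSet (S j) := by
    intro j
    have : S j = Mg ⁻¹' Set.Ioi (er (j:ℝ)) := rfl
    rw [this]
    exact hMgm measurableSet_Ioi
  -- Step A : pointwise layer bound
  have stepA : ∀ x, Mg x ^ q ≤
      ∑' j : ℤ, (S j).indicator (fun _ => er (((j:ℝ) + 1) * q)) x := by
    intro x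
    rcases eq_or_ne (Mg x) 0 with h0 | h0
    · rw [h0, ENNReal.zero_rpow_of_pos hq0]
      exact zero_le
    rcases eq_or_ne (Mg x) ∞ with hT | hT
    · -- the right-hand side is infinite
      have hmem : ∀ j : ℤ, x ∈ S j := by
        intro j
        simp only [hS, Set.mem_setOf_eq, hT]
        exact (er_ne_top _).lt_top
      have hterm : ∀ j : ℤ, er (((j:ℝ) + 1) * q) ≤
          ∑' j : ℤ, (S j).indicator (fun _ => er (((j:ℝ) + 1) * q)) x := by
        intro j
        calc er (((j:ℝ) + 1) * q)
            = (S j).indicator (fun _ => er (((j:ℝ) + 1) * q)) x := by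
              rw [Set.indicator_of_mem (hmem j)]
          _ ≤ _ := ENNReal.le_tsum j
      have htop : ∑' j : ℤ, (S j).indicator (fun _ => er (((j:ℝ) + 1) * q)) x = ∞ := by
        by_contra hne
        obtain ⟨j, hj⟩ := exists_lt_er _ hne q hq0
        rw [show q * (j:ℝ) + q = ((j:ℝ) + 1) * q from by ring] at hj
        exact absurd hj (not_lt.2 (hterm j))
      rw [htop]
      exact le_top
    -- finite positive case
    · have hpos : 0 < (Mg x).toReal := ENNReal.toReal_pos h0 hT
      set L := Real.logb 2 (Mg x).toReal with hL
      set j : ℤ := ⌈L⌉ - 1 with hj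
      have hrep : Mg x = ENNReal.ofReal ((2:ℝ) ^ L) := by
        rw [Real.rpow_logb two_pos (by norm_num) hpos, ENNReal.ofReal_toReal hT]
      have hmem : x ∈ S j := by
        simp only [hS, Set.mem_setOf_eq, hrep]
        unfold er
        rw [ENNReal.ofReal_lt_ofReal_iff (rpow_pos L)]
        apply Real.rpow_lt_rpow_left_iff one_lt_two |>.2
        have hjr : ((j:ℤ):ℝ) = (⌈L⌉:ℝ) - 1 := by rw [hj]; push_cast; ring
        have := Int.ceil_lt_add_one L
        linarith
      have hup : Mg x ≤ er ((j:ℝ) + 1) := by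
        rw [hrep]
        unfold er
        apply ENNReal.ofReal_le_ofReal
        apply Real.rpow_le_rpow_left_iff one_lt_two |>.2
        have hjr : ((j:ℤ):ℝ) = (⌈L⌉:ℝ) - 1 := by rw [hj]; push_cast; ring
        have := Int.le_ceil L
        linarith
      calc Mg x ^ q ≤ er ((j:ℝ) + 1) ^ q := ENNReal.rpow_le_rpow hup hq0.le
        _ = er (((j:ℝ) + 1) * q) := er_rpow _ _
        _ = (S j).indicator (fun _ => er (((j:ℝ) + 1) * q)) x := by
            rw [Set.indicator_of_mem hmem]
        _ ≤ _ := ENNReal.le_tsum j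
  -- Step C : weak-type estimate with truncation
  have stepC : ∀ j : ℤ, μ (S j) ≤
      er (1 - (j:ℝ)) * ∫⁻ x, ({y | er ((j:ℝ) - 1) < g y}).indicator g x ∂μ := by
    intro j
    set c : ℝ≥0∞ := er ((j:ℝ) - 1) with hc
    set g₂ : Rn n → ℝ≥0∞ := fun y => min (g y) c with hg₂
    set g₁ : Rn n → ℝ≥0∞ := fun y => g y - g₂ y with hg₁
    have hg₂m : Measurable g₂ := hg.min measurable_const
    have hg₁m : Measurable g₁ := hg.sub hg₂m
    have hsplit : ∀ y, g₁ y + g₂ y = g y := fun y =>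
      tsub_add_cancel_of_le (min_le_left _ _)
    have hsubset : S j ⊆ {x | c < Mdy μ sgen g₁ x} := by
      intro x hx
      simp only [hS, Set.mem_setOf_eq] at hx
      simp only [Set.mem_setOf_eq]
      by_contra hcon
      push_neg at hcon
      have h1 : Mg x ≤ Mdy μ sgen g₁ x + Mdy μ sgen g₂ x := by
        have hfg : (fun y => g₁ y + g₂ y) = g := funext hsplit
        have h0 : Mg = Mdy μ sgen (fun y => g₁ y + g₂ y) := by rw [hfg, hMg]
        rw [h0]
        exact Mdy_le_add hg₁m x
      have h2 : Mdy μ sgen g₂ x ≤ c := Mdy_le_const (fun y => min_le_right _ _) x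
      have h3 : Mg x ≤ c + c := h1.trans (add_le_add hcon h2)
      have h4 : c + c = er (j:ℝ) := by
        rw [← two_mul, hc]
        have h2 : (2:ℝ≥0∞) = er 1 := by
          unfold er
          rw [Real.rpow_one]
          norm_num
        rw [h2, ← er_add]
        norm_num
      rw [h4] at h3
      exact absurd hx (not_lt.2 h3)
    have hweak := weak μ sgen g₁ (t := c) (er_ne_zero _) (er_ne_top _)
    have hg₁le : ∀ y, g₁ y ≤ ({y | er ((j:ℝ) - 1) < g y}).indicator g y := by
      intro y
      rcases le_or_gt (g y) c with hle | hlt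
      · have : g₂ y = g y := min_eq_left hle
        simp only [hg₁, this, tsub_self]
        exact zero_le
      · rw [Set.indicator_of_mem (by exact hlt)]
        exact tsub_le_self
    calc μ (S j) ≤ μ {x | c < Mdy μ sgen g₁ x} := measure_mono hsubset
      _ ≤ c⁻¹ * ∫⁻ x, g₁ x ∂μ := hweak
      _ ≤ c⁻¹ * ∫⁻ x, ({y | er ((j:ℝ) - 1) < g y}).indicator g x ∂μ :=
          mul_le_mul_right (lintegral_mono hg₁le) _
      _ = er (1 - (j:ℝ)) * ∫⁻ x, ({y | er ((j:ℝ) - 1) < g y}).indicator g x ∂μ := by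
          rw [hc, er_inv]
          ring_nf
  -- Step E : pointwise sum bound
  have stepE : ∀ x, ∑' j : ℤ, er ((j:ℝ) * (q - 1)) *
      ({y | er ((j:ℝ) - 1) < g y}).indicator g x ≤ K' * g x ^ q := by
    intro x
    set V := g x with hV
    have hind : ∀ j : ℤ, ({y | er ((j:ℝ) - 1) < g y}).indicator g x
        = if er ((j:ℝ) - 1) < V then V else 0 := by
      intro j
      by_cases hx : er ((j:ℝ) - 1) < V
      · rw [Set.indicator_of_mem (by exact hx), if_pos hx]
      · rw [Set.indicator_of_notMem (by exact hx), if_neg hx]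
    rcases eq_or_ne V 0 with h0 | h0
    · have : ∀ j : ℤ, er ((j:ℝ) * (q - 1)) *
          ({y | er ((j:ℝ) - 1) < g y}).indicator g x = 0 := by
        intro j
        rw [hind j, if_neg (by rw [h0]; exact fun h => (not_lt.2 (zero_le)) h)]
        simp
      simp only [this, tsum_zero]
      exact zero_le
    rcases eq_or_ne V ∞ with hT | hT
    · have : K' * V ^ q = ∞ := by
        rw [hT, ENNReal.top_rpow_of_pos hq0, ENNReal.mul_top hK'0]
      rw [this]
      exact le_top
    · have hpos : 0 < V.toReal := ENNReal.toReal_pos h0 hT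
      set L := Real.logb 2 V.toReal with hL
      set j₀ : ℤ := ⌈L⌉ with hj₀
      have hrep : V = ENNReal.ofReal ((2:ℝ) ^ L) := by
        rw [Real.rpow_logb two_pos (by norm_num) hpos, ENNReal.ofReal_toReal hT]
      have hiff : ∀ j : ℤ, er ((j:ℝ) - 1) < V ↔ j ≤ j₀ := by
        intro j
        rw [hrep]
        unfold er
        rw [ENNReal.ofReal_lt_ofReal_iff (rpow_pos L),
          Real.rpow_lt_rpow_left_iff one_lt_two]
        constructor
        · intro h
          have h2 : ((j:ℝ) - 1) < (⌈L⌉ : ℝ) := lt_of_lt_of_le h (Int.le_ceil L)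
          rw [hj₀]
          have : (j : ℝ) < (⌈L⌉ : ℝ) + 1 := by linarith
          exact_mod_cast Int.lt_add_one_iff.mp (by exact_mod_cast this)
        · intro h
          have h2 : (j:ℝ) ≤ (⌈L⌉:ℝ) := by exact_mod_cast h
          have := Int.ceil_lt_add_one L
          linarith
      calc ∑' j : ℤ, er ((j:ℝ) * (q - 1)) * ({y | er ((j:ℝ) - 1) < g y}).indicator g x
          = ∑' j : ℤ, (if j ≤ j₀ then er ((j:ℝ) * (q-1)) else 0) * V := by
            refine tsum_congr fun j => ?_
            rw [hind j]
            by_cases hj : j ≤ j₀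
            · rw [if_pos hj, if_pos ((hiff j).2 hj)]
            · rw [if_neg hj, if_neg (fun h => hj ((hiff j).1 h)), mul_zero, zero_mul]
        _ = (∑' j : ℤ, (if j ≤ j₀ then er ((j:ℝ) * (q-1)) else 0)) * V :=
            ENNReal.tsum_mul_right
        _ = er ((j₀:ℝ) * (q-1)) * (1 - er (-(q-1)))⁻¹ * V := by rw [geom hq1]
        _ ≤ er (q-1) * V ^ (q-1) * (1 - er (-(q-1)))⁻¹ * V := by
            apply mul_le_mul_left
            apply mul_le_mul_left
            have h1 : er ((j₀:ℝ) - 1) ≤ V := ((hiff j₀).2 le_rfl).le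
            calc er ((j₀:ℝ) * (q-1)) = er (q - 1) * er (((j₀:ℝ) - 1) * (q-1)) := by
                  rw [← er_add]; ring_nf
              _ = er (q - 1) * er ((j₀:ℝ) - 1) ^ (q-1) := by rw [er_rpow]
              _ ≤ er (q - 1) * V ^ (q-1) := by
                  exact mul_le_mul_right (ENNReal.rpow_le_rpow h1 hq1.le) _
        _ = K' * (V ^ (q-1) * V) := by rw [hK']; ring
        _ = K' * V ^ q := by
            congr 1
            have h5 : V ^ (q-1) * V ^ (1:ℝ) = V ^ q := by
              rw [← ENNReal.rpow_add _ _ h0 hT]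
              norm_num
            rw [ENNReal.rpow_one] at h5
            exact h5
  -- assemble
  calc ∫⁻ x, Mg x ^ q ∂μ
      ≤ ∫⁻ x, ∑' j : ℤ, (S j).indicator (fun _ => er (((j:ℝ) + 1) * q)) x ∂μ :=
        lintegral_mono stepA
    _ = ∑' j : ℤ, er (((j:ℝ) + 1) * q) * μ (S j) := by
        rw [lintegral_tsum fun j => (measurable_const.indicator (hSm j)).aemeasurable]
        exact tsum_congr fun j => lintegral_indicator_const (hSm j) _
    _ ≤ ∑' j : ℤ, er (((j:ℝ) + 1) * q) * (er (1 - (j:ℝ)) *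
          ∫⁻ x, ({y | er ((j:ℝ) - 1) < g y}).indicator g x ∂μ) :=
        ENNReal.tsum_le_tsum fun j => mul_le_mul_right (stepC j) _
    _ = ∑' j : ℤ, er (q + 1) * (er ((j:ℝ) * (q - 1)) *
          ∫⁻ x, ({y | er ((j:ℝ) - 1) < g y}).indicator g x ∂μ) := by
        refine tsum_congr fun j => ?_
        rw [← mul_assoc, ← mul_assoc, ← er_add, ← er_add]
        ring_nf
    _ = er (q + 1) * ∑' j : ℤ, ∫⁻ x, er ((j:ℝ) * (q - 1)) *
          ({y | er ((j:ℝ) - 1) < g y}).indicator g x ∂μ := by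
        rw [ENNReal.tsum_mul_left]
        congr 1
        refine tsum_congr fun j => ?_
        rw [lintegral_const_mul _ (hg.indicator
          (show MeasurableSet {y | er ((j:ℝ) - 1) < g y} from hg measurableSet_Ioi))]
    _ = er (q + 1) * ∫⁻ x, ∑' j : ℤ, er ((j:ℝ) * (q - 1)) *
          ({y | er ((j:ℝ) - 1) < g y}).indicator g x ∂μ := by
        congr 1
        rw [lintegral_tsum fun j : ℤ =>
          ((hg.indicator (show MeasurableSet {y | er ((j:ℝ) - 1) < g y} from
            hg measurableSet_Ioi)).const_mul _).aemeasurable]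
    _ ≤ er (q + 1) * ∫⁻ x, K' * g x ^ q ∂μ :=
        mul_le_mul_right (lintegral_mono stepE) _
    _ = er (q + 1) * K' * ∫⁻ x, g x ^ q ∂μ := by
        rw [lintegral_const_mul _ (show Measurable fun x => g x ^ q from
          ENNReal.continuous_rpow_const.measurable.comp hg), hK']
        ring

end CP
namespace CP

lemma ofReal_norm_avg_le (μ : Measure (Rn n)) (Q : DyadicCube n) (φ : Rn n → ℂ) :
    ENNReal.ofReal ‖avg μ Q φ‖ ≤
      (∫⁻ z in Q.carrier, (‖φ z‖₊ : ℝ≥0∞) ∂μ) / μ Q.carrier := by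
  rcases eq_or_ne (μ Q.carrier) 0 with h0 | h0
  · have : μ.restrict Q.carrier = 0 := Measure.restrict_eq_zero.2 h0
    unfold avg
    rw [this]
    simp
  rcases eq_or_ne (μ Q.carrier) ∞ with hT | hT
  · unfold avg
    rw [hT]
    simp
  · have h1 : ENNReal.ofReal ‖∫ z in Q.carrier, φ z ∂μ‖ ≤
        ∫⁻ z in Q.carrier, (‖φ z‖₊ : ℝ≥0∞) ∂μ := by
      rw [ofReal_norm_eq_enorm]
      exact enorm_integral_le_lintegral_enorm _
    have h2 : ‖avg μ Q φ‖ = (μ Q.carrier).toReal⁻¹ * ‖∫ z in Q.carrier, φ z ∂μ‖ := by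
      unfold avg
      rw [norm_smul, Real.norm_eq_abs, abs_of_nonneg (by positivity)]
    calc ENNReal.ofReal ‖avg μ Q φ‖
        = ENNReal.ofReal ((μ Q.carrier).toReal⁻¹) *
            ENNReal.ofReal ‖∫ z in Q.carrier, φ z ∂μ‖ := by
          rw [h2, ENNReal.ofReal_mul (by positivity)]
      _ ≤ ENNReal.ofReal ((μ Q.carrier).toReal⁻¹) *
            ∫⁻ z in Q.carrier, (‖φ z‖₊ : ℝ≥0∞) ∂μ := mul_le_mul_right h1 _
      _ = (μ Q.carrier)⁻¹ * ∫⁻ z in Q.carrier, (‖φ z‖₊ : ℝ≥0∞) ∂μ := by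
          rw [← ENNReal.toReal_inv, ENNReal.ofReal_toReal (ENNReal.inv_ne_top.2 h0)]
      _ = (∫⁻ z in Q.carrier, (‖φ z‖₊ : ℝ≥0∞) ∂μ) / μ Q.carrier := by
          rw [div_eq_mul_inv, mul_comm]

lemma lpNormE_mono_ae {μ : Measure (Rn n)} {q : ℝ} (hq : 0 < q)
    {g₁ g₂ : Rn n → ℝ≥0∞} (h : ∀ᵐ x ∂μ, g₁ x ≤ g₂ x) :
    lpNormE μ q g₁ ≤ lpNormE μ q g₂ := by
  unfold lpNormE
  refine ENNReal.rpow_le_rpow ?_ (by positivity)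
  refine lintegral_mono_ae (h.mono fun x hx => ?_)
  exact ENNReal.rpow_le_rpow hx hq.le

end CP
/-- Lemma 6.3: Carleson packing estimate. -/
theorem carleson_packing (n : ℕ) (q : ℝ) (hn : 1 ≤ n) (hq : 1 < q) :
    ∃ C : ℝ, 0 ≤ C ∧
      ∀ μ : Measure (Rn n), (∀ b : Set (Rn n), Bornology.IsBounded b → μ b < ⊤) →
      ∀ (sgen : ℤ) (A : ℝ), 0 < A →
      ∀ a : DyadicCube n → Rn n → ℝ,
        (∀ Q x, 0 ≤ a Q x) → (∀ Q, Measurable (a Q)) →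
        (∀ F : DyadicCube n, F.k ≤ sgen →
          ∀ᵐ x ∂μ,
            (∑' Q : {Q : DyadicCube n // Q.carrier ⊆ F.carrier},
                ENNReal.ofReal (a Q.1 x ^ 2))
              ≤ Set.indicator F.carrier (fun _ => ENNReal.ofReal A) x) →
      ∀ φ : Rn n → ℂ, MemLp φ (ENNReal.ofReal q) μ →
        lpNormE μ q (fun x =>
            (∑' Q : {Q : DyadicCube n // Q.k ≤ sgen},
                ENNReal.ofReal (‖avg μ Q.1 φ‖ ^ 2 * a Q.1 x ^ 2)) ^ ((1 : ℝ) / 2))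
          ≤ ENNReal.ofReal (C * Real.sqrt A) * eLpNorm φ (ENNReal.ofReal q) μ := by
  obtain ⟨K, hK0, hKt, hKstrong⟩ := CP.strong hq
  have hq0 : (0:ℝ) < q := by linarith
  have hKq_ne_top : K ^ (1/q) ≠ ∞ := ENNReal.rpow_ne_top_of_nonneg (by positivity) hKt
  refine ⟨(K ^ (1/q)).toReal, ENNReal.toReal_nonneg, ?_⟩
  intro μ _hbd sgen A hA a ha0 _hameas hcarl φ hφ
  have hsA : ENNReal.ofReal (Real.sqrt A) = ENNReal.ofReal A ^ ((1:ℝ)/2) := by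
    rw [ENNReal.ofReal_rpow_of_pos hA, Real.sqrt_eq_rpow]
  -- measurable representative of φ
  set ψ := hφ.1.mk φ with hψ
  have hψm : StronglyMeasurable ψ := hφ.1.stronglyMeasurable_mk
  have hψae : φ =ᵐ[μ] ψ := hφ.1.ae_eq_mk
  have havg : ∀ Q : DyadicCube n, avg μ Q φ = avg μ Q ψ := by
    intro Q
    unfold avg
    congr 1
    exact integral_congr_ae (ae_restrict_of_ae hψae)
  set f : Rn n → ℝ≥0∞ := fun x => (‖ψ x‖₊ : ℝ≥0∞) with hf
  have hfm : Measurable f := hψm.measurable.nnnorm.coe_nnreal_ennreal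
  set M := CP.Mdy μ sgen f with hM
  have hMm : Measurable M := CP.measurable_Mdy μ sgen f
  have havgle : ∀ (Q : DyadicCube n) (x : Rn n), Q.k ≤ sgen → x ∈ Q.carrier →
      ENNReal.ofReal ‖avg μ Q ψ‖ ≤ M x := fun Q x hk hx =>
    (CP.ofReal_norm_avg_le μ Q ψ).trans (CP.rat_le_Mdy hk hx)
  -- vanishing of `a Q` outside `Q`
  have H1 : ∀ᵐ x ∂μ, ∀ Q : DyadicCube n, Q.k ≤ sgen → x ∉ Q.carrier → a Q x = 0 := by
    rw [ae_all_iff]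
    intro Q
    by_cases hk : Q.k ≤ sgen
    · filter_upwards [hcarl Q hk] with x hx _ hxQ
      have hterm : ENNReal.ofReal (a Q x ^ 2) ≤ 0 := by
        calc ENNReal.ofReal (a Q x ^ 2)
            ≤ ∑' Q' : {Q' : DyadicCube n // Q'.carrier ⊆ Q.carrier},
                ENNReal.ofReal (a Q'.1 x ^ 2) :=
              ENNReal.le_tsum (⟨Q, subset_rfl⟩ : {Q' : DyadicCube n // Q'.carrier ⊆ Q.carrier})
          _ ≤ Set.indicator Q.carrier (fun _ => ENNReal.ofReal A) x := hx
          _ = 0 := by rw [Set.indicator_of_notMem hxQ]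
      have h2 : a Q x ^ 2 ≤ 0 :=
        ENNReal.ofReal_eq_zero.1 (le_antisymm hterm (zero_le))
      nlinarith [ha0 Q x]
    · filter_upwards with x hk'
      exact absurd hk' hk
  -- Carleson packing for all cubes simultaneously
  have H2 : ∀ᵐ x ∂μ, ∀ F : DyadicCube n, F.k ≤ sgen →
      (∑' Q : {Q : DyadicCube n // Q.carrier ⊆ F.carrier}, ENNReal.ofReal (a Q.1 x ^ 2))
        ≤ Set.indicator F.carrier (fun _ => ENNReal.ofReal A) x := by
    rw [ae_all_iff]
    intro F
    by_cases hk : F.k ≤ sgen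
    · filter_upwards [hcarl F hk] with x hx _
      exact hx
    · filter_upwards with x hk'
      exact absurd hk' hk
  -- total packing bound
  have H3 : ∀ᵐ x ∂μ, (∑' Q : {Q : DyadicCube n // Q.k ≤ sgen},
      ENNReal.ofReal (a Q.1 x ^ 2)) ≤ ENNReal.ofReal A := by
    filter_upwards [H1, H2] with x h1 h2
    set F := dyadicAt sgen x with hF
    have hFk : F.k = sgen := rfl
    have hxF : x ∈ F.carrier := CP.mem_dyadicAt sgen x
    have hind : Set.indicator F.carrier (fun _ => ENNReal.ofReal A) x = ENNReal.ofReal A :=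
      Set.indicator_of_mem hxF _
    have hS1 : (∑' Q : {Q : DyadicCube n // Q.k ≤ sgen}, ENNReal.ofReal (a Q.1 x ^ 2))
        = ∑' Q : DyadicCube n,
            Set.indicator (setOf (fun Q : DyadicCube n => Q.k ≤ sgen))
              (fun Q => ENNReal.ofReal (a Q x ^ 2)) Q := by
      exact tsum_subtype (setOf (fun Q : DyadicCube n => Q.k ≤ sgen))
        (fun Q => ENNReal.ofReal (a Q x ^ 2))
    have hS2 : (∑' Q : {Q : DyadicCube n // Q.carrier ⊆ F.carrier},
          ENNReal.ofReal (a Q.1 x ^ 2))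
        = ∑' Q : DyadicCube n,
            Set.indicator (setOf (fun Q : DyadicCube n => Q.carrier ⊆ F.carrier))
              (fun Q => ENNReal.ofReal (a Q x ^ 2)) Q := by
      exact tsum_subtype (setOf (fun Q : DyadicCube n => Q.carrier ⊆ F.carrier))
        (fun Q => ENNReal.ofReal (a Q x ^ 2))
    rw [hS1]
    calc (∑' Q : DyadicCube n,
            Set.indicator (setOf (fun Q : DyadicCube n => Q.k ≤ sgen))
              (fun Q => ENNReal.ofReal (a Q x ^ 2)) Q)
        ≤ ∑' Q : DyadicCube n,
            Set.indicator (setOf (fun Q : DyadicCube n => Q.carrier ⊆ F.carrier))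
              (fun Q => ENNReal.ofReal (a Q x ^ 2)) Q := by
          refine ENNReal.tsum_le_tsum fun Q => ?_
          by_cases hk : Q.k ≤ sgen
          · by_cases hxQ : x ∈ Q.carrier
            · have hsub : Q.carrier ⊆ F.carrier :=
                CP.carrier_subset (by rw [hFk]; exact hk) ⟨x, hxQ, hxF⟩
              rw [Set.indicator_of_mem (by exact hk),
                Set.indicator_of_mem (by exact hsub)]
            · rw [Set.indicator_of_mem (by exact hk), h1 Q hk hxQ]
              simp
          · rw [Set.indicator_of_notMem (by exact hk)]
            exact zero_le
      _ = ∑' Q : {Q : DyadicCube n // Q.carrier ⊆ F.carrier},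
            ENNReal.ofReal (a Q.1 x ^ 2) := hS2.symm
      _ ≤ Set.indicator F.carrier (fun _ => ENNReal.ofReal A) x := h2 F (le_of_eq hFk)
      _ = ENNReal.ofReal A := hind
  -- a.e. pointwise domination of the square function
  have H4 : ∀ᵐ x ∂μ, (∑' Q : {Q : DyadicCube n // Q.k ≤ sgen},
      ENNReal.ofReal (‖avg μ Q.1 φ‖ ^ 2 * a Q.1 x ^ 2)) ^ ((1:ℝ)/2)
        ≤ ENNReal.ofReal (Real.sqrt A) * M x := by
    filter_upwards [H1, H3] with x h1 h3
    have hsum : (∑' Q : {Q : DyadicCube n // Q.k ≤ sgen},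
        ENNReal.ofReal (‖avg μ Q.1 φ‖ ^ 2 * a Q.1 x ^ 2))
          ≤ M x ^ (2:ℕ) * ENNReal.ofReal A := by
      calc (∑' Q : {Q : DyadicCube n // Q.k ≤ sgen},
            ENNReal.ofReal (‖avg μ Q.1 φ‖ ^ 2 * a Q.1 x ^ 2))
          ≤ ∑' Q : {Q : DyadicCube n // Q.k ≤ sgen},
              M x ^ (2:ℕ) * ENNReal.ofReal (a Q.1 x ^ 2) := by
            refine ENNReal.tsum_le_tsum fun Q => ?_
            rw [havg Q.1, ENNReal.ofReal_mul (by positivity)]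
            by_cases hxQ : x ∈ Q.1.carrier
            · refine mul_le_mul_left ?_ _
              rw [ENNReal.ofReal_pow (norm_nonneg _)]
              exact pow_le_pow_left' (havgle Q.1 x Q.2 hxQ) 2
            · rw [h1 Q.1 Q.2 hxQ]
              simp
        _ = M x ^ (2:ℕ) * ∑' Q : {Q : DyadicCube n // Q.k ≤ sgen},
              ENNReal.ofReal (a Q.1 x ^ 2) := ENNReal.tsum_mul_left
        _ ≤ M x ^ (2:ℕ) * ENNReal.ofReal A := mul_le_mul_right h3 _
    calc (∑' Q : {Q : DyadicCube n // Q.k ≤ sgen},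
          ENNReal.ofReal (‖avg μ Q.1 φ‖ ^ 2 * a Q.1 x ^ 2)) ^ ((1:ℝ)/2)
        ≤ (M x ^ (2:ℕ) * ENNReal.ofReal A) ^ ((1:ℝ)/2) :=
          ENNReal.rpow_le_rpow hsum (by norm_num)
      _ = ENNReal.ofReal (Real.sqrt A) * M x := by
          rw [ENNReal.mul_rpow_of_nonneg _ _ (by norm_num : (0:ℝ) ≤ 1/2),
            ← ENNReal.rpow_natCast (M x) 2, ← ENNReal.rpow_mul, hsA]
          norm_num [ENNReal.rpow_one, mul_comm]
  -- put everything together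
  have hnorm : eLpNorm φ (ENNReal.ofReal q) μ = (∫⁻ x, f x ^ q ∂μ) ^ (1/q) := by
    rw [eLpNorm_congr_ae hψae,
      eLpNorm_eq_lintegral_rpow_enorm_toReal (by simpa using hq0) ENNReal.ofReal_ne_top,
      ENNReal.toReal_ofReal hq0.le]
    rfl
  calc lpNormE μ q (fun x =>
        (∑' Q : {Q : DyadicCube n // Q.k ≤ sgen},
          ENNReal.ofReal (‖avg μ Q.1 φ‖ ^ 2 * a Q.1 x ^ 2)) ^ ((1 : ℝ) / 2))
      ≤ lpNormE μ q (fun x => ENNReal.ofReal (Real.sqrt A) * M x) :=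
        CP.lpNormE_mono_ae hq0 H4
    _ = ENNReal.ofReal (Real.sqrt A) * (∫⁻ x, M x ^ q ∂μ) ^ (1/q) := by
        unfold lpNormE
        have hpt : ∀ x, (ENNReal.ofReal (Real.sqrt A) * M x) ^ q
            = ENNReal.ofReal (Real.sqrt A) ^ q * M x ^ q := fun x =>
          ENNReal.mul_rpow_of_nonneg _ _ hq0.le
        simp_rw [hpt]
        rw [lintegral_const_mul _ (show Measurable fun x => M x ^ q from
          ENNReal.continuous_rpow_const.measurable.comp hMm),
          ENNReal.mul_rpow_of_nonneg _ _ (by positivity : (0:ℝ) ≤ 1/q),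
          ← ENNReal.rpow_mul, mul_one_div, div_self hq0.ne', ENNReal.rpow_one]
    _ ≤ ENNReal.ofReal (Real.sqrt A) * (K * ∫⁻ x, f x ^ q ∂μ) ^ (1/q) :=
        mul_le_mul_right (ENNReal.rpow_le_rpow (hKstrong n μ sgen f hfm)
          (by positivity)) _
    _ = ENNReal.ofReal ((K ^ (1/q)).toReal * Real.sqrt A) *
          eLpNorm φ (ENNReal.ofReal q) μ := by
        rw [hnorm, ENNReal.mul_rpow_of_nonneg _ _ (by positivity : (0:ℝ) ≤ 1/q),
          ENNReal.ofReal_mul ENNReal.toReal_nonneg,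
          ENNReal.ofReal_toReal hKq_ne_top]
        ring
end
end

section
/- Let μ be a Borel measure on ℝⁿ satisfying μ(B(x,r)) ≤ C_μ r^m for all x ∈ ℝⁿ and r > 0. Let Q ⊂ R be concentric cubes with common center c and ℓ(R) > 4ℓ(Q), let N = min{k ≥ 1 : R ⊂ 6^{k+1} Q}, and assume that μ(6^{k+1} Q) > 6^{m+1} μ(6^{k} Q) for every k = 1, …, N (i.e. none of the intermediate cubes 6^k Q is (6, 6^{m+1})-doubling). Then there is a constant C depending only on C_μ, m and n such that ∫_{4R ∖ 2Q} |x − c|^{−m} dμ(x) ≤ C. -/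
open MeasureTheory Metric Set
open scoped ENNReal NNReal BigOperators

noncomputable section

variable {n : ℕ}

section Aux

variable {n : ℕ}

lemma abs_coord_le_dist (x y : Rn n) (i : Fin n) : |x i - y i| ≤ dist x y := by
  rw [EuclideanSpace.dist_eq]
  have h : dist (x i) (y i) ^ 2 ≤ ∑ j, dist (x j) (y j) ^ 2 :=
    Finset.single_le_sum (f := fun j => dist (x j) (y j) ^ 2) (fun j _ => sq_nonneg _)
      (Finset.mem_univ i)
  calc |x i - y i| = dist (x i) (y i) := (Real.dist_eq _ _).symm
    _ = Real.sqrt (dist (x i) (y i) ^ 2) := (Real.sqrt_sq dist_nonneg).symm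
    _ ≤ _ := Real.sqrt_le_sqrt h

lemma Cube.isClosed_dilate (Q : Cube n) (a : ℝ) : IsClosed (Q.dilate a) := by
  have h : Q.dilate a = ⋂ i, {x : Rn n | |x i - Q.center i| ≤ a * Q.side / 2} := by
    ext x; simp [Cube.dilate, Set.mem_iInter]
  rw [h]
  refine isClosed_iInter fun i => ?_
  have hc : Continuous fun x : Rn n => x i := (continuous_apply i).comp (PiLp.continuous_ofLp 2 _)
  exact isClosed_le ((hc.sub continuous_const).abs) continuous_const

lemma Cube.measurableSet_dilate (Q : Cube n) (a : ℝ) : MeasurableSet (Q.dilate a) :=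
  (Q.isClosed_dilate a).measurableSet

lemma Cube.dilate_mono (Q : Cube n) {a b : ℝ} (h : a ≤ b) : Q.dilate a ⊆ Q.dilate b := by
  intro x hx i
  exact (hx i).trans (by have := Q.side_pos; nlinarith)

lemma Cube.dilate_subset_ball (Q : Cube n) {a : ℝ} (ha : 0 < a) (hn : 1 ≤ n) :
    Q.dilate a ⊆ ball Q.center (Real.sqrt n * a * Q.side) := by
  have hs := Q.side_pos
  have hn1 : (1 : ℝ) ≤ Real.sqrt n := by
    rw [show (1:ℝ) = Real.sqrt 1 by simp]
    exact Real.sqrt_le_sqrt (by exact_mod_cast hn)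
  intro x hx
  rw [mem_ball, EuclideanSpace.dist_eq]
  have h1 : ∑ i, dist (x i) (Q.center i) ^ 2 ≤ (n : ℝ) * (a * Q.side / 2) ^ 2 := by
    calc ∑ i, dist (x i) (Q.center i) ^ 2 ≤ ∑ _i : Fin n, (a * Q.side / 2) ^ 2 := by
          refine Finset.sum_le_sum fun i _ => ?_
          have := hx i
          rw [Real.dist_eq]
          exact pow_le_pow_left₀ (abs_nonneg _) (hx i) 2
      _ = (n : ℝ) * (a * Q.side / 2) ^ 2 := by simp [Finset.sum_const, Finset.card_univ]
  calc Real.sqrt (∑ i, dist (x i) (Q.center i) ^ 2) ≤ Real.sqrt ((n : ℝ) * (a * Q.side / 2) ^ 2) :=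
        Real.sqrt_le_sqrt h1
    _ = Real.sqrt n * (a * Q.side / 2) := by
        rw [Real.sqrt_mul (by positivity), Real.sqrt_sq (by positivity)]
    _ < Real.sqrt n * a * Q.side := by nlinarith [mul_pos ha hs]

lemma measure_dilate_le {μ : Measure (Rn n)} {m Cμ : ℝ} (hμ : IsPowerBounded μ m Cμ)
    (hn : 1 ≤ n) (Q : Cube n) {a : ℝ} (ha : 0 < a) :
    μ (Q.dilate a) ≤ ENNReal.ofReal (max Cμ 0 * (Real.sqrt n * a * Q.side) ^ m) := by
  have hs := Q.side_pos
  have hr : 0 < Real.sqrt n * a * Q.side := by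
    have : (0:ℝ) < Real.sqrt n := Real.sqrt_pos.2 (by exact_mod_cast Nat.pos_of_ne_zero (by omega))
    positivity
  calc μ (Q.dilate a) ≤ μ (ball Q.center (Real.sqrt n * a * Q.side)) :=
        measure_mono (Q.dilate_subset_ball ha hn)
    _ ≤ ENNReal.ofReal (Cμ * (Real.sqrt n * a * Q.side) ^ m) := hμ _ _ hr
    _ ≤ _ := ENNReal.ofReal_le_ofReal
        (mul_le_mul_of_nonneg_right (le_max_left _ _) (Real.rpow_nonneg hr.le _))

lemma lintegral_biUnion_finset_le' {α : Type*} [MeasurableSpace α] (μ : Measure α)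
    (f : α → ℝ≥0∞) (s : Finset ℕ) (t : ℕ → Set α) :
    ∫⁻ x in ⋃ k ∈ s, t k, f x ∂μ ≤ ∑ k ∈ s, ∫⁻ x in t k, f x ∂μ := by
  classical
  induction s using Finset.induction with
  | empty => simp
  | insert _ _ h ih =>
    rw [Finset.set_biUnion_insert, Finset.sum_insert h]
    exact (lintegral_union_le _ _ _).trans (add_le_add le_rfl ih)

lemma annulus_real_calc (m : ℝ) {s : ℝ} (hs : 0 < s) (Cμ' : ℝ) {n : ℕ} (hn : 1 ≤ n)
    (k j : ℕ) :
    ((6:ℝ)^k * s / 2) ^ (-m) * (Cμ' * (Real.sqrt n * 6 ^ (k + j + 1) * s) ^ m)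
      = Cμ' * (12 * Real.sqrt n) ^ m * ((6:ℝ)^j)⁻¹ * ((6:ℝ) ^ (m + 1)) ^ j := by
  have hsq : (0:ℝ) < Real.sqrt n :=
    Real.sqrt_pos.2 (by exact_mod_cast Nat.pos_of_ne_zero (by omega))
  have hb : (0:ℝ) < 6 ^ k * s / 2 := by positivity
  have hbase : Real.sqrt n * (6:ℝ) ^ (k + j + 1) * s
      = (6 ^ k * s / 2) * (12 * Real.sqrt n * 6 ^ j) := by
    rw [pow_succ, pow_add]; ring
  rw [hbase, Real.mul_rpow hb.le (by positivity), Real.rpow_neg hb.le,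
    Real.mul_rpow (by positivity : (0:ℝ) ≤ 12 * Real.sqrt n) (by positivity : (0:ℝ) ≤ (6:ℝ)^j)]
  have h2 : ((6:ℝ)^j) ^ m * ((6:ℝ)^j) = ((6:ℝ) ^ (m + 1)) ^ j := by
    rw [← Real.rpow_natCast ((6:ℝ) ^ (m+1)) j, ← Real.rpow_natCast (6:ℝ) j,
      ← Real.rpow_mul (by norm_num : (0:ℝ) ≤ 6), ← Real.rpow_mul (by norm_num : (0:ℝ) ≤ 6),
      ← Real.rpow_add (by norm_num : (0:ℝ) < 6)]
    ring_nf
  rw [← h2]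
  have hP : ((6:ℝ) ^ k * s / 2) ^ m ≠ 0 := (Real.rpow_pos_of_pos hb m).ne'
  have hJ : ((6:ℝ)^j) ≠ 0 := by positivity
  field_simp

end Aux


section Aux2

variable {n : ℕ}

/-- The `k`-th annulus between dilates of `Q`. -/
def annulusSet (Q : Cube n) (k : ℕ) : Set (Rn n) :=
  Q.dilate ((6:ℝ)^(k+1)) \ (Q.dilate 2 ∪ Q.dilate ((6:ℝ)^k))

lemma annulusSet_measurable (Q : Cube n) (k : ℕ) : MeasurableSet (annulusSet Q k) :=
  (Q.measurableSet_dilate _).diff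
    ((Q.measurableSet_dilate _).union (Q.measurableSet_dilate _))

lemma annulus_cover (Q : Cube n) : ∀ j : ℕ, ∀ x, x ∈ Q.dilate ((6:ℝ)^(j+1)) →
    x ∉ Q.dilate 2 → ∃ k ≤ j, x ∈ annulusSet Q k := by
  intro j
  induction j with
  | zero =>
    intro x hx h2
    refine ⟨0, le_rfl, hx, ?_⟩
    rintro (h | h)
    · exact h2 h
    · exact h2 (Q.dilate_mono (by norm_num) h)
  | succ j ih =>
    intro x hx h2
    by_cases hx' : x ∈ Q.dilate ((6:ℝ)^(j+1))
    · obtain ⟨k, hk, hmem⟩ := ih x hx' h2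
      exact ⟨k, by omega, hmem⟩
    · refine ⟨j+1, le_rfl, hx, ?_⟩
      rintro (h | h)
      · exact h2 h
      · exact hx' h

end Aux2

/-- the estimate (4.15): if none of the intermediate cubes `6^k Q` between
`6Q` and `R` is `(6,6^{m+1})`-doubling, then `∫_{4R∖2Q} |x-c|^{-m} dμ(x) ≲ 1`. -/
theorem annulus_integral_bound (n : ℕ) (m Cμ : ℝ) (hn : 1 ≤ n) (hm : 0 < m) :
    ∃ C : ℝ, 0 ≤ C ∧
      ∀ μ : Measure (Rn n), IsPowerBounded μ m Cμ →
      ∀ (Q R : Cube n) (N : ℕ),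
        R.center = Q.center → 4 * Q.side < R.side → 1 ≤ N →
        R.carrier ⊆ Q.dilate (6 ^ (N + 1)) →
        (∀ k : ℕ, 1 ≤ k → k < N → ¬ R.carrier ⊆ Q.dilate (6 ^ (k + 1))) →
        (∀ k : ℕ, 1 ≤ k → k ≤ N →
          ENNReal.ofReal ((6 : ℝ) ^ (m + 1)) * μ (Q.dilate (6 ^ k))
            < μ (Q.dilate (6 ^ (k + 1)))) →
        ∫⁻ x in R.dilate 4 \ Q.dilate 2, ENNReal.ofReal (dist x Q.center ^ (-m)) ∂μ
          ≤ ENNReal.ofReal C := by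
  have hsqn : (0:ℝ) < Real.sqrt n :=
    Real.sqrt_pos.2 (by exact_mod_cast Nat.pos_of_ne_zero (by omega))
  have hCμ'0 : (0:ℝ) ≤ max Cμ 0 := le_max_right _ _
  have hB0 : (0:ℝ) ≤ max Cμ 0 * (12 * Real.sqrt n) ^ m :=
    mul_nonneg hCμ'0 (Real.rpow_nonneg (by positivity) _)
  refine ⟨3 * (max Cμ 0 * (12 * Real.sqrt n) ^ m), by linarith, ?_⟩
  intro μ hμ Q R N hcen hside hN1 hRsub _hmin hchain
  have hs : 0 < Q.side := Q.side_pos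
  have hRs : 0 < R.side := R.side_pos
  have i0 : Fin n := ⟨0, by omega⟩
  -- Step A : `ℓ(R) ≤ 6^(N+1) ℓ(Q)`
  have hRside : R.side ≤ 6 ^ (N+1) * Q.side := by
    let x₀ : Rn n := WithLp.toLp 2 (fun _ => 0)
    let x₁ : Rn n := WithLp.toLp 2 (fun i => Q.center i + R.side / 2)
    have hx₁mem : x₁ ∈ R.carrier := by
      intro i
      show |x₁ i - R.center i| ≤ 1 * R.side / 2
      have h : x₁ i = Q.center i + R.side / 2 := rfl
      rw [h, hcen, add_sub_cancel_left, abs_of_pos (by positivity)]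
      linarith
    have key := hRsub hx₁mem i0
    have h : x₁ i0 = Q.center i0 + R.side / 2 := rfl
    rw [h, add_sub_cancel_left, abs_of_pos (by positivity)] at key
    linarith
  -- Step B : `4R ⊆ 6^(N+2) Q`
  have hSsub : R.dilate 4 ⊆ Q.dilate ((6:ℝ)^(N+2)) := by
    intro x hx i
    have h1 : |x i - R.center i| ≤ 4 * R.side / 2 := hx i
    rw [hcen] at h1
    have h6 : (0:ℝ) < 6^(N+1) := by positivity
    have hp : (6:ℝ)^(N+2) = 6 * 6^(N+1) := by rw [pow_succ]; ring
    calc |x i - Q.center i| ≤ 4 * R.side / 2 := h1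
      _ ≤ (6:ℝ)^(N+2) * Q.side / 2 := by rw [hp]; nlinarith
  -- covering of `4R ∖ 2Q` by annuli
  have hScover : R.dilate 4 \ Q.dilate 2 ⊆ ⋃ k ∈ Finset.range (N+2), annulusSet Q k := by
    rintro x ⟨hx1, hx2⟩
    obtain ⟨k, hk, hmem⟩ := annulus_cover Q (N+1) x (hSsub hx1) hx2
    exact Set.mem_biUnion (Finset.mem_range.2 (by omega)) hmem
  -- doubling chain
  set D := ENNReal.ofReal ((6:ℝ)^(m+1)) with hD
  have hD0 : D ≠ 0 := by
    rw [hD]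
    exact (ENNReal.ofReal_pos.2 (Real.rpow_pos_of_pos (by norm_num) _)).ne'
  have hDtop : D ≠ ⊤ := by rw [hD]; exact ENNReal.ofReal_ne_top
  have chain : ∀ i : ℕ, i ≤ N →
      μ (Q.dilate ((6:ℝ)^(N+1-i))) * D^i ≤ μ (Q.dilate ((6:ℝ)^(N+1))) := by
    intro i
    induction i with
    | zero => intro _; simp
    | succ i ih =>
      intro hi
      have hk := hchain (N - i) (by omega) (by omega)
      have e1 : N + 1 - (i+1) = N - i := by omega
      have e2 : N - i + 1 = N + 1 - i := by omega
      calc μ (Q.dilate ((6:ℝ)^(N+1-(i+1)))) * D^(i+1)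
          = (D * μ (Q.dilate ((6:ℝ)^(N-i)))) * D^i := by rw [e1, pow_succ]; ring
        _ ≤ μ (Q.dilate ((6:ℝ)^(N-i+1))) * D^i := mul_le_mul_left hk.le _
        _ = μ (Q.dilate ((6:ℝ)^(N+1-i))) * D^i := by rw [e2]
        _ ≤ _ := ih (by omega)
  -- unified measure bound
  have measBound : ∀ k, k ≤ N + 1 →
      μ (Q.dilate ((6:ℝ)^(k+1))) * D^(N-k)
        ≤ ENNReal.ofReal (max Cμ 0 * (Real.sqrt n * 6^(k+(N-k)+1) * Q.side) ^ m) := by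
    intro k hk
    rcases Nat.lt_or_ge k (N+1) with hlt | hge
    · have e1 : k + (N-k) + 1 = N + 1 := by omega
      have e2 : N + 1 - (N - k) = k + 1 := by omega
      rw [e1]
      refine le_trans ?_ (measure_dilate_le hμ hn Q (a := (6:ℝ)^(N+1)) (by positivity))
      have h := chain (N-k) (by omega)
      rwa [e2] at h
    · have e1 : k = N + 1 := by omega
      subst e1
      have e2 : N - (N+1) = 0 := by omega
      rw [e2, pow_zero, mul_one, show N + 1 + 0 + 1 = (N + 1) + 1 by omega]
      exact measure_dilate_le hμ hn Q (by positivity)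
  -- per-annulus bound
  have termBound : ∀ k ∈ Finset.range (N+2),
      ∫⁻ x in annulusSet Q k, ENNReal.ofReal (dist x Q.center ^ (-m)) ∂μ
        ≤ ENNReal.ofReal (max Cμ 0 * (12 * Real.sqrt n) ^ m * ((6:ℝ)^(N-k))⁻¹) := by
    intro k hk'
    have hk : k ≤ N + 1 := by have := Finset.mem_range.1 hk'; omega
    have hbk : (0:ℝ) < 6^k * Q.side / 2 := by positivity
    have hpoint : ∀ x ∈ annulusSet Q k, ENNReal.ofReal (dist x Q.center ^ (-m))
        ≤ ENNReal.ofReal ((6^k * Q.side / 2) ^ (-m)) := by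
      intro x hx
      obtain ⟨hx1, hx2⟩ := hx
      have hx3 : x ∉ Q.dilate ((6:ℝ)^k) := fun h => hx2 (Or.inr h)
      have hex : ∃ i, ¬ |x i - Q.center i| ≤ 6^k * Q.side / 2 := by
        by_contra h
        push_neg at h
        exact hx3 h
      obtain ⟨i, hi⟩ := hex
      push_neg at hi
      have hdist : 6^k * Q.side / 2 ≤ dist x Q.center :=
        hi.le.trans (abs_coord_le_dist x Q.center i)
      exact ENNReal.ofReal_le_ofReal
        (Real.rpow_le_rpow_of_nonpos hbk hdist (neg_nonpos.2 hm.le))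
    have h1 : ∫⁻ x in annulusSet Q k, ENNReal.ofReal (dist x Q.center ^ (-m)) ∂μ
        ≤ ENNReal.ofReal ((6^k * Q.side / 2) ^ (-m)) * μ (Q.dilate ((6:ℝ)^(k+1))) := by
      calc ∫⁻ x in annulusSet Q k, ENNReal.ofReal (dist x Q.center ^ (-m)) ∂μ
          ≤ ∫⁻ _x in annulusSet Q k, ENNReal.ofReal ((6^k * Q.side / 2) ^ (-m)) ∂μ :=
            setLIntegral_mono' (annulusSet_measurable Q k) hpoint
        _ = ENNReal.ofReal ((6^k * Q.side / 2) ^ (-m)) * μ (annulusSet Q k) :=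
            setLIntegral_const _ _
        _ ≤ _ := mul_le_mul_right (measure_mono diff_subset) _
    have h2 : (∫⁻ x in annulusSet Q k, ENNReal.ofReal (dist x Q.center ^ (-m)) ∂μ) * D^(N-k)
        ≤ ENNReal.ofReal (max Cμ 0 * (12 * Real.sqrt n) ^ m * ((6:ℝ)^(N-k))⁻¹) * D^(N-k) := by
      calc (∫⁻ x in annulusSet Q k, ENNReal.ofReal (dist x Q.center ^ (-m)) ∂μ) * D^(N-k)
          ≤ (ENNReal.ofReal ((6^k * Q.side / 2) ^ (-m)) * μ (Q.dilate ((6:ℝ)^(k+1)))) * D^(N-k) :=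
            mul_le_mul_left h1 _
        _ = ENNReal.ofReal ((6^k * Q.side / 2) ^ (-m)) * (μ (Q.dilate ((6:ℝ)^(k+1))) * D^(N-k)) := by
            ring
        _ ≤ ENNReal.ofReal ((6^k * Q.side / 2) ^ (-m))
              * ENNReal.ofReal (max Cμ 0 * (Real.sqrt n * 6^(k+(N-k)+1) * Q.side) ^ m) :=
            mul_le_mul_right (measBound k hk) _
        _ = ENNReal.ofReal ((6^k * Q.side / 2) ^ (-m)
              * (max Cμ 0 * (Real.sqrt n * 6^(k+(N-k)+1) * Q.side) ^ m)) :=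
            (ENNReal.ofReal_mul (Real.rpow_nonneg hbk.le _)).symm
        _ = ENNReal.ofReal (max Cμ 0 * (12 * Real.sqrt n) ^ m * ((6:ℝ)^(N-k))⁻¹) * D^(N-k) := by
            rw [annulus_real_calc m hs (max Cμ 0) hn k (N-k), hD,
              ← ENNReal.ofReal_pow (by positivity : (0:ℝ) ≤ (6:ℝ)^(m+1)),
              ← ENNReal.ofReal_mul (by positivity)]
    exact (ENNReal.mul_le_mul_iff_left (pow_ne_zero _ hD0) (ENNReal.pow_ne_top hDtop)).mp h2
  -- geometric series bound
  have geom : ∑ k ∈ Finset.range (N+2), ((6:ℝ)^(N-k))⁻¹ ≤ 3 := by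
    rw [Finset.sum_range_succ]
    have e : N - (N+1) = 0 := by omega
    rw [e, pow_zero, inv_one]
    have h1 : ∑ k ∈ Finset.range (N+1), ((6:ℝ)^(N-k))⁻¹
        = ∑ k ∈ Finset.range (N+1), ((6:ℝ)⁻¹)^k := by
      rw [← Finset.sum_range_reflect (fun k => ((6:ℝ)⁻¹)^k) (N+1)]
      refine Finset.sum_congr rfl fun k hk => ?_
      rw [inv_pow]
      congr 1
      all_goals omega
    rw [h1, geom_sum_eq (by norm_num : (6:ℝ)⁻¹ ≠ 1)]
    have hx : (0:ℝ) < ((6:ℝ)⁻¹)^(N+1) := by positivity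
    have h2 : (((6:ℝ)⁻¹)^(N+1) - 1)/((6:ℝ)⁻¹ - 1) ≤ 2 := by
      rw [div_le_iff_of_neg (by norm_num : (6:ℝ)⁻¹ - 1 < 0)]
      nlinarith
    linarith
  have sum_le : ∑ k ∈ Finset.range (N+2),
      max Cμ 0 * (12 * Real.sqrt n) ^ m * ((6:ℝ)^(N-k))⁻¹
        ≤ 3 * (max Cμ 0 * (12 * Real.sqrt n) ^ m) := by
    rw [← Finset.mul_sum]
    calc max Cμ 0 * (12 * Real.sqrt n) ^ m * ∑ k ∈ Finset.range (N+2), ((6:ℝ)^(N-k))⁻¹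
        ≤ max Cμ 0 * (12 * Real.sqrt n) ^ m * 3 := mul_le_mul_of_nonneg_left geom hB0
      _ = 3 * (max Cμ 0 * (12 * Real.sqrt n) ^ m) := by ring
  calc ∫⁻ x in R.dilate 4 \ Q.dilate 2, ENNReal.ofReal (dist x Q.center ^ (-m)) ∂μ
      ≤ ∫⁻ x in ⋃ k ∈ Finset.range (N+2), annulusSet Q k,
          ENNReal.ofReal (dist x Q.center ^ (-m)) ∂μ := lintegral_mono_set hScover
    _ ≤ ∑ k ∈ Finset.range (N+2),
          ∫⁻ x in annulusSet Q k, ENNReal.ofReal (dist x Q.center ^ (-m)) ∂μ :=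
        lintegral_biUnion_finset_le' μ _ _ _
    _ ≤ ∑ k ∈ Finset.range (N+2),
          ENNReal.ofReal (max Cμ 0 * (12 * Real.sqrt n) ^ m * ((6:ℝ)^(N-k))⁻¹) :=
        Finset.sum_le_sum termBound
    _ = ENNReal.ofReal (∑ k ∈ Finset.range (N+2),
          max Cμ 0 * (12 * Real.sqrt n) ^ m * ((6:ℝ)^(N-k))⁻¹) :=
        (ENNReal.ofReal_sum_of_nonneg (fun i _ => by positivity)).symm
    _ ≤ ENNReal.ofReal (3 * (max Cμ 0 * (12 * Real.sqrt n) ^ m)) :=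
        ENNReal.ofReal_le_ofReal sum_le
end
end
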